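/- arXiv:2108.02185 — 6 statements merged into one kernel-verified Lean document; each statement's English description precedes it below -/
import Mathlib

section
/- Let G be a graph with n vertices, let q be a configuration of n vectors in R^{d+1} with Gram matrix S = Q^T Q, and suppose there exists a nonzero positive semidefinite linear equilibrium stress matrix Ω for q (i.e., Ω is symmetric, supported on the diagonal and edges of G, PSD, nonzero, and Ω Q^T = 0). Then the function g(K) = tr(SK) − log det K, restricted to positive definite matrices K whose off-diagonal support lies in the edges of G, is unbounded below; in fact g(I + tΩ) → −∞ as t → ∞. -/
open Matrix Filter
open scoped ComplexOrder

/-! Along the ray `K = 1 + t • Ω` the linear term is constant: since `Ω` is symmetric,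
`Q * Ω = (Ω * Qᵀ)ᵀ = 0`, hence `S * Ω = Qᵀ * Q * Ω = 0`. Diagonalising `Ω`,
`det (1 + t • Ω) = ∏ (1 + t λᵢ) ≥ 1 + t * trace Ω` with `trace Ω > 0` because `Ω ≠ 0` is PSD,
so `- log det` tends to `-∞`. For `t ≥ 0` the matrix `1 + t • Ω` is positive definite with the
sparsity pattern of `Ω`, so it is feasible. -/

theorem Finset.one_add_sum_le_prod_one_add {ι R : Type*} [CommSemiring R] [PartialOrder R]
    [IsOrderedRing R] (s : Finset ι) {f : ι → R} (hf : ∀ i ∈ s, 0 ≤ f i) :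
    1 + ∑ i ∈ s, f i ≤ ∏ i ∈ s, (1 + f i) := by
  classical
  induction s using Finset.induction_on with
  | empty => simp
  | insert a s ha ih =>
    rw [Finset.sum_insert ha, Finset.prod_insert ha]
    have hfa := hf a (Finset.mem_insert_self a s)
    have hs : 0 ≤ ∑ i ∈ s, f i :=
      Finset.sum_nonneg fun i hi => hf i (Finset.mem_insert_of_mem hi)
    calc 1 + (f a + ∑ i ∈ s, f i) ≤ 1 + (f a + ∑ i ∈ s, f i) + f a * ∑ i ∈ s, f i :=
          le_add_of_nonneg_right (mul_nonneg hfa hs)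
      _ = (1 + f a) * (1 + ∑ i ∈ s, f i) := by ring
      _ ≤ (1 + f a) * ∏ i ∈ s, (1 + f i) :=
          mul_le_mul_of_nonneg_left (ih fun i hi => hf i (Finset.mem_insert_of_mem hi))
            (add_nonneg zero_le_one hfa)

theorem not_bddBelow_image_of_tendsto_atBot {ι α β : Type*} [Preorder β] [NoBotOrder β]
    {l : Filter ι} [l.NeBot] {f : α → β} {s : Set α} {γ : ι → α} (hγ : ∀ᶠ t in l, γ t ∈ s)
    (h : Tendsto (f ∘ γ) l atBot) : ¬BddBelow (f '' s) := by
  rintro ⟨b, hb⟩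
  obtain ⟨t, hts, hlt⟩ := (hγ.and (h.eventually_lt_atBot b)).exists
  exact (hb (Set.mem_image_of_mem f hts)).not_gt hlt

namespace Matrix

theorem transpose_mul_self_mul_eq_zero {m n R : Type*} [Fintype m] [Fintype n] [CommSemiring R]
    {Q : Matrix m n R} {Ω : Matrix n n R} (hΩ : Ω.IsSymm) (h : Ω * Qᵀ = 0) :
    Qᵀ * Q * Ω = 0 := by
  rw [Matrix.mul_assoc, ← transpose_transpose (Q * Ω), transpose_mul, hΩ.eq, h, transpose_zero,
    Matrix.mul_zero]

variable {n : Type*} [Fintype n] [DecidableEq n]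

section RCLike

variable {𝕜 : Type*} [RCLike 𝕜]

theorem IsHermitian.det_one_add_smul {A : Matrix n n 𝕜} (hA : A.IsHermitian) (t : ℝ) :
    det (1 + t • A) = ∏ i, ((1 + t * hA.eigenvalues i : ℝ) : 𝕜) := by
  have hcfc : 1 + t • A = cfc (fun x => 1 + t * x) A := by
    rw [cfc_add .., cfc_const_one .., cfc_const_mul .., cfc_id' ..]
  rw [hcfc, cfc_eq hA, IsHermitian.cfc, Unitary.conjStarAlgAut_apply, det_mul_right_comm]
  simp

theorem PosSemidef.one_add_mul_trace_le_det_one_add_smul {A : Matrix n n 𝕜} (hA : A.PosSemidef)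
    {t : ℝ} (ht : 0 ≤ t) : 1 + t * RCLike.re A.trace ≤ RCLike.re (det (1 + t • A)) := by
  rw [hA.isHermitian.det_one_add_smul, ← RCLike.ofReal_prod, RCLike.ofReal_re,
    hA.isHermitian.trace_eq_sum_eigenvalues, ← RCLike.ofReal_sum, RCLike.ofReal_re,
    Finset.mul_sum]
  exact Finset.univ.one_add_sum_le_prod_one_add fun i _ => mul_nonneg ht (hA.eigenvalues_nonneg i)

end RCLike

theorem tendsto_trace_mul_one_add_smul_sub_log_det_atBot {S Ω : Matrix n n ℝ}
    (hΩ : Ω.PosSemidef) (hne : Ω ≠ 0) (hSΩ : S * Ω = 0) :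
    Tendsto (fun t : ℝ => trace (S * (1 + t • Ω)) - Real.log (det (1 + t • Ω))) atTop atBot := by
  have htrace : 0 < Ω.trace := hΩ.trace_nonneg.lt_of_ne' (mt hΩ.trace_eq_zero_iff.mp hne)
  have hlin : Tendsto (fun t : ℝ => 1 + t * Ω.trace) atTop atTop :=
    tendsto_atTop_add_const_left _ _ (tendsto_id.atTop_mul_const htrace)
  have hlog : Tendsto (fun t : ℝ => Real.log (det (1 + t • Ω))) atTop atTop := by
    refine tendsto_atTop_mono' _ ?_ (Real.tendsto_log_atTop.comp hlin)
    filter_upwards [eventually_ge_atTop 0] with t ht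
    have hdet := hΩ.one_add_mul_trace_le_det_one_add_smul ht
    simp only [RCLike.re_to_real] at hdet
    exact Real.log_le_log (by positivity) hdet
  simp only [Matrix.mul_add, Matrix.mul_one, Matrix.mul_smul, hSΩ, smul_zero, add_zero]
  exact tendsto_atBot_add_const_left _ _ (tendsto_neg_atTop_atBot.comp hlog)

end Matrix

/-- If the vector configuration `q` (with Gram matrix `S = Qᵀ * Q`) admits a
nonzero PSD linear equilibrium stress matrix `Ω` supported on the diagonal and the edges
of `G`, then the objective `g(K) = tr(S K) - log det K` of the Gram MLT optimization
problem is unbounded below on the feasible set; in fact `g(I + tΩ) → -∞` as `t → ∞`. -/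
theorem stmt1 (n d : ℕ) (G : SimpleGraph (Fin n))
    (q : Fin n → Fin (d + 1) → ℝ)
    (S : Matrix (Fin n) (Fin n) ℝ)
    (hS : S = (Matrix.of fun (k : Fin (d + 1)) (i : Fin n) => q i k)ᵀ *
              (Matrix.of fun (k : Fin (d + 1)) (i : Fin n) => q i k))
    (Ω : Matrix (Fin n) (Fin n) ℝ) (hne : Ω ≠ 0) (hpsd : Ω.PosSemidef)
    (hsupp : ∀ i j, i ≠ j → ¬ G.Adj i j → Ω i j = 0)
    (hstress : Ω * (Matrix.of fun (i : Fin n) (k : Fin (d + 1)) => q i k) = 0) :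
    Tendsto (fun t : ℝ => Matrix.trace (S * (1 + t • Ω)) - Real.log (1 + t • Ω).det)
      atTop atBot ∧
    ¬ BddBelow ((fun K : Matrix (Fin n) (Fin n) ℝ => Matrix.trace (S * K) - Real.log K.det) ''
        {K : Matrix (Fin n) (Fin n) ℝ | K.PosDef ∧ ∀ i j, i ≠ j → ¬ G.Adj i j → K i j = 0}) := by
  have hSΩ : S * Ω = 0 :=
    hS ▸ transpose_mul_self_mul_eq_zero (isHermitian_iff_isSymm.mp hpsd.isHermitian) hstress
  have hlim := tendsto_trace_mul_one_add_smul_sub_log_det_atBot hpsd hne hSΩ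
  refine ⟨hlim, not_bddBelow_image_of_tendsto_atBot ?_ hlim⟩
  filter_upwards [eventually_ge_atTop 0] with t ht
  refine ⟨PosDef.one.add_posSemidef (hpsd.smul ht), fun i j hij hadj => ?_⟩
  simp [one_apply_ne hij, hsupp i j hij hadj]
end

section
/- Let G be a graph with n vertices, let q be a configuration of n vectors in R^{d+1} with Gram matrix S = Q^T Q, and suppose there is no nonzero PSD linear equilibrium stress matrix for q. Then for every symmetric matrix Ω supported on the diagonal and edges of G with Frobenius norm 1, the function t ↦ tr(S(I+tΩ)) − log det(I+tΩ) tends to +∞ as t approaches the supremum of {t > 0 : I + tΩ is positive definite}. Consequently the Gram MLT optimization problem has a global minimum. -/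
open Matrix Filter

attribute [local instance] Matrix.normedAddCommGroup Matrix.normedSpace

section AuxLemmas

theorem aux_traceEig {n : ℕ} {A : Matrix (Fin n) (Fin n) ℝ} (hA : A.IsHermitian) :
    A.trace = ∑ i, hA.eigenvalues i := by
  simpa using hA.trace_eq_sum_eigenvalues

theorem aux_det_le_trace_pow {n : ℕ} {A : Matrix (Fin n) (Fin n) ℝ} (hA : A.PosSemidef) :
    A.det ≤ A.trace ^ n := by
  have hdet : A.det = ∏ i, hA.1.eigenvalues i := by simpa using hA.1.det_eq_prod_eigenvalues
  rw [hdet, aux_traceEig hA.1]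
  calc ∏ i, hA.1.eigenvalues i ≤ ∏ _i : Fin n, ∑ j, hA.1.eigenvalues j := by
        refine Finset.prod_le_prod (fun i _ => hA.eigenvalues_nonneg i) (fun i _ => ?_)
        exact Finset.single_le_sum (fun j _ => hA.eigenvalues_nonneg j) (Finset.mem_univ i)
    _ = (∑ j, hA.1.eigenvalues j) ^ n := by simp [Finset.prod_const]

theorem aux_log_le_two_sqrt {x : ℝ} (hx : 0 < x) : Real.log x ≤ 2 * Real.sqrt x := by
  have h := Real.log_le_sub_one_of_pos (Real.sqrt_pos.mpr hx)
  rw [Real.log_sqrt hx.le] at h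
  linarith [Real.sqrt_nonneg x]

theorem trace_tmul {m n : ℕ} (C : Matrix (Fin m) (Fin n) ℝ) :
    Matrix.trace (Cᵀ * C) = ∑ j, ∑ i, (C i j)^2 := by
  simp [Matrix.trace, Matrix.mul_apply, Matrix.diag, sq]

theorem trace_tmul_nonneg {m n : ℕ} (C : Matrix (Fin m) (Fin n) ℝ) :
    0 ≤ Matrix.trace (Cᵀ * C) := by
  rw [trace_tmul]
  exact Finset.sum_nonneg fun j _ => Finset.sum_nonneg fun i _ => sq_nonneg _

theorem eq_zero_of_trace_tmul {m n : ℕ} (C : Matrix (Fin m) (Fin n) ℝ)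
    (h : Matrix.trace (Cᵀ * C) = 0) : C = 0 := by
  rw [trace_tmul] at h
  ext i j
  have h1 : ∀ j' ∈ Finset.univ, (0:ℝ) ≤ ∑ i, (C i j')^2 :=
    fun j' _ => Finset.sum_nonneg fun i _ => sq_nonneg _
  have h2 := (Finset.sum_eq_zero_iff_of_nonneg h1).mp h j (Finset.mem_univ j)
  have h3 := (Finset.sum_eq_zero_iff_of_nonneg
    (fun i' _ => sq_nonneg (C i' j))).mp h2 i (Finset.mem_univ i)
  simpa using sq_eq_zero_iff.mp h3

/-- trace of S*K for K PSD: nonneg, and zero implies K * Qᵀ = 0 -/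
theorem trace_S_mul {n m : ℕ} (Q : Matrix (Fin m) (Fin n) ℝ)
    {K : Matrix (Fin n) (Fin n) ℝ} (hK : K.PosSemidef) :
    0 ≤ Matrix.trace ((Qᵀ * Q) * K) ∧
      (Matrix.trace ((Qᵀ * Q) * K) = 0 → K * Qᵀ = 0) := by
  obtain ⟨B, rfl⟩ : ∃ B : Matrix (Fin n) (Fin n) ℝ, K = Bᴴ * B := by
    open scoped MatrixOrder in exact CStarAlgebra.nonneg_iff_eq_star_mul_self.mp hK.nonneg
  have hB : Bᴴ = Bᵀ := by ext i j; simp [Matrix.conjTranspose_apply]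
  rw [hB]
  have key : Matrix.trace ((Qᵀ * Q) * (Bᵀ * B)) = Matrix.trace ((B * Qᵀ)ᵀ * (B * Qᵀ)) := by
    rw [Matrix.transpose_mul, Matrix.transpose_transpose]
    rw [show (Qᵀ * Q) * (Bᵀ * B) = Qᵀ * (Q * Bᵀ * B) by simp only [Matrix.mul_assoc]]
    rw [Matrix.trace_mul_comm]
    simp only [Matrix.mul_assoc]
  constructor
  · rw [key]; exact trace_tmul_nonneg _
  · intro h
    rw [key] at h
    have := eq_zero_of_trace_tmul _ h
    rw [Matrix.mul_assoc, this, Matrix.mul_zero]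

theorem quadform_abs_le {n : ℕ} (Ω : Matrix (Fin n) (Fin n) ℝ) (x : Fin n → ℝ) :
    |x ⬝ᵥ (Ω *ᵥ x)| ≤ (∑ i, ∑ j, |Ω i j|) * (x ⬝ᵥ x) := by
  have hx : ∀ i j : Fin n, |x i| * |x j| ≤ x ⬝ᵥ x := by
    intro i j
    have h1 : x i ^ 2 ≤ x ⬝ᵥ x := by
      simpa [sq, dotProduct] using
        Finset.single_le_sum (f := fun k => x k * x k)
          (fun k _ => mul_self_nonneg _) (Finset.mem_univ i)
    have h2 : x j ^ 2 ≤ x ⬝ᵥ x := by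
      simpa [sq, dotProduct] using
        Finset.single_le_sum (f := fun k => x k * x k)
          (fun k _ => mul_self_nonneg _) (Finset.mem_univ j)
    nlinarith [abs_nonneg (x i), abs_nonneg (x j), sq_abs (x i), sq_abs (x j)]
  calc |x ⬝ᵥ (Ω *ᵥ x)| = |∑ i, ∑ j, x i * (Ω i j * x j)| := by
        simp [dotProduct, Matrix.mulVec, Finset.mul_sum]
    _ ≤ ∑ i, ∑ j, |x i * (Ω i j * x j)| := by
        refine (Finset.abs_sum_le_sum_abs _ _).trans ?_
        exact Finset.sum_le_sum fun i _ => Finset.abs_sum_le_sum_abs _ _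
    _ ≤ ∑ i, ∑ j, |Ω i j| * (x ⬝ᵥ x) := by
        refine Finset.sum_le_sum fun i _ => Finset.sum_le_sum fun j _ => ?_
        rw [abs_mul, abs_mul]
        calc |x i| * (|Ω i j| * |x j|) = |Ω i j| * (|x i| * |x j|) := by ring
          _ ≤ |Ω i j| * (x ⬝ᵥ x) := by
              exact mul_le_mul_of_nonneg_left (hx i j) (abs_nonneg _)
    _ = (∑ i, ∑ j, |Ω i j|) * (x ⬝ᵥ x) := by simp [Finset.sum_mul]

theorem dot_nonneg {n : ℕ} (x : Fin n → ℝ) : 0 ≤ x ⬝ᵥ x :=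
  Finset.sum_nonneg fun i _ => mul_self_nonneg _

theorem dot_pos {n : ℕ} {x : Fin n → ℝ} (hx : x ≠ 0) : 0 < x ⬝ᵥ x := by
  rcases (dot_nonneg x).lt_or_eq with h | h
  · exact h
  · exfalso; apply hx; ext i
    have := (Finset.sum_eq_zero_iff_of_nonneg
      (fun k (_ : k ∈ Finset.univ) => mul_self_nonneg (x k))).mp h.symm i (Finset.mem_univ i)
    simpa [mul_self_eq_zero] using this
theorem posDef_lower {n : ℕ} {M : Matrix (Fin n) (Fin n) ℝ} (hM : M.PosDef) :
    ∃ c > 0, ∀ x : Fin n → ℝ, c * (x ⬝ᵥ x) ≤ x ⬝ᵥ (M *ᵥ x) := by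
  set Sp : Set (Fin n → ℝ) := {x | x ⬝ᵥ x = 1} with hSp
  have hcont : Continuous fun x : Fin n → ℝ => x ⬝ᵥ (M *ᵥ x) := by
    simp only [dotProduct, Matrix.mulVec]
    fun_prop
  have hcont2 : Continuous fun x : Fin n → ℝ => x ⬝ᵥ x := by
    simp only [dotProduct]; fun_prop
  by_cases hne : Sp.Nonempty
  · have hclosed : IsClosed Sp := isClosed_eq hcont2 continuous_const
    have hbdd : Bornology.IsBounded Sp := by
      rw [Metric.isBounded_iff_subset_closedBall 0]
      refine ⟨1, fun x hx => ?_⟩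
      simp only [Metric.mem_closedBall, dist_zero_right]
      rw [pi_norm_le_iff_of_nonneg zero_le_one]
      intro i
      have h1 : x i ^ 2 ≤ x ⬝ᵥ x := by
        simpa [sq, dotProduct] using
          Finset.single_le_sum (f := fun k => x k * x k)
            (fun k _ => mul_self_nonneg _) (Finset.mem_univ i)
      rw [hx] at h1
      rw [Real.norm_eq_abs, ← Real.sqrt_one, ← Real.sqrt_sq_eq_abs]
      exact Real.sqrt_le_sqrt h1
    have hcomp : IsCompact Sp := Metric.isCompact_of_isClosed_isBounded hclosed hbdd
    obtain ⟨x₀, hx₀, hmin⟩ := hcomp.exists_isMinOn hne hcont.continuousOn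
    have hx₀ne : x₀ ≠ 0 := by
      intro h; rw [hSp] at hx₀; simp [h] at hx₀
    refine ⟨x₀ ⬝ᵥ (M *ᵥ x₀), by simpa using hM.dotProduct_mulVec_pos hx₀ne, fun x => ?_⟩
    by_cases hx : x = 0
    · simp [hx, Matrix.mulVec_zero]
    · have hd : 0 < x ⬝ᵥ x := dot_pos hx
      set a : ℝ := (Real.sqrt (x ⬝ᵥ x))⁻¹ with ha
      have hsq : Real.sqrt (x ⬝ᵥ x) > 0 := Real.sqrt_pos.mpr hd
      have hmem : (a • x) ∈ Sp := by
        rw [hSp]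
        simp only [Set.mem_setOf_eq, smul_dotProduct, dotProduct_smul,
          smul_eq_mul]
        rw [ha]
        field_simp
        rw [Real.sq_sqrt hd.le]
      have := hmin hmem
      simp only [Set.mem_setOf_eq] at this
      have heq : (a • x) ⬝ᵥ (M *ᵥ (a • x)) = a^2 * (x ⬝ᵥ (M *ᵥ x)) := by
        rw [Matrix.mulVec_smul, smul_dotProduct, dotProduct_smul]
        simp [sq]; ring
      rw [heq] at this
      have ha2 : a^2 = (x ⬝ᵥ x)⁻¹ := by
        rw [ha, ← Real.sqrt_inv, Real.sq_sqrt (inv_nonneg.mpr hd.le)]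
      rw [ha2] at this
      calc (x₀ ⬝ᵥ (M *ᵥ x₀)) * (x ⬝ᵥ x) ≤ ((x ⬝ᵥ x)⁻¹ * (x ⬝ᵥ (M *ᵥ x))) * (x ⬝ᵥ x) := by
            exact mul_le_mul_of_nonneg_right this hd.le
        _ = x ⬝ᵥ (M *ᵥ x) := by field_simp
  · refine ⟨1, one_pos, fun x => ?_⟩
    by_cases hx : x = 0
    · simp [hx, Matrix.mulVec_zero]
    · exfalso
      apply hne
      have hd : 0 < x ⬝ᵥ x := dot_pos hx
      refine ⟨(Real.sqrt (x ⬝ᵥ x))⁻¹ • x, ?_⟩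
      simp only [hSp, Set.mem_setOf_eq, smul_dotProduct, dotProduct_smul,
        smul_eq_mul]
      field_simp
      rw [Real.sq_sqrt hd.le]

theorem posDef_of_psd_det {n : ℕ} {A : Matrix (Fin n) (Fin n) ℝ} (hA : A.PosSemidef)
    (h : A.det ≠ 0) : A.PosDef := by
  refine .of_dotProduct_mulVec_pos hA.1 fun x hx => ?_
  rcases (hA.dotProduct_mulVec_nonneg x).lt_or_eq with hlt | heq
  · exact hlt
  · exfalso
    apply h
    rw [← Matrix.exists_mulVec_eq_zero_iff]
    refine ⟨x, hx, ?_⟩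
    exact (hA.dotProduct_mulVec_zero_iff x).mp heq.symm

theorem isClosed_psd {n : ℕ} : IsClosed {A : Matrix (Fin n) (Fin n) ℝ | A.PosSemidef} := by
  have : {A : Matrix (Fin n) (Fin n) ℝ | A.PosSemidef} =
      {A | Aᴴ = A} ∩ ⋂ x : Fin n → ℝ, {A | 0 ≤ star x ⬝ᵥ (A *ᵥ x)} := by
    ext A
    simp only [Set.mem_setOf_eq, Set.mem_inter_iff, Set.mem_iInter, Matrix.posSemidef_iff_dotProduct_mulVec,
      Matrix.IsHermitian]
  rw [this]
  refine IsClosed.inter (isClosed_eq (continuous_id.matrix_conjTranspose) continuous_id) ?_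
  refine isClosed_iInter fun x => ?_
  refine isClosed_le continuous_const ?_
  have : Continuous fun A : Matrix (Fin n) (Fin n) ℝ => star x ⬝ᵥ (A *ᵥ x) := by
    simp only [dotProduct, Matrix.mulVec]
    refine continuous_finset_sum _ fun i _ => Continuous.mul continuous_const ?_
    refine continuous_finset_sum _ fun j _ => ?_
    exact (continuous_id.matrix_elem i j).mul continuous_const
  exact this

theorem isClosed_supp {n : ℕ} (G : SimpleGraph (Fin n)) :
    IsClosed {A : Matrix (Fin n) (Fin n) ℝ | ∀ i j, i ≠ j → ¬ G.Adj i j → A i j = 0} := by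
  have : {A : Matrix (Fin n) (Fin n) ℝ | ∀ i j, i ≠ j → ¬ G.Adj i j → A i j = 0} =
      ⋂ i, ⋂ j, ⋂ (_ : i ≠ j), ⋂ (_ : ¬ G.Adj i j), {A | A i j = 0} := by
    ext A; simp only [Set.mem_setOf_eq, Set.mem_iInter]
  rw [this]
  refine isClosed_iInter fun i => isClosed_iInter fun j => isClosed_iInter fun _ =>
    isClosed_iInter fun _ => ?_
  exact isClosed_eq ((continuous_apply j).comp (continuous_apply i)) continuous_const

theorem cont_traceS {n : ℕ} (S : Matrix (Fin n) (Fin n) ℝ) :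
    Continuous fun K : Matrix (Fin n) (Fin n) ℝ => Matrix.trace (S * K) := by
  simp only [Matrix.trace, Matrix.diag, Matrix.mul_apply]
  refine continuous_finset_sum _ fun i _ => continuous_finset_sum _ fun j _ => ?_
  exact Continuous.mul continuous_const ((continuous_apply i).comp (continuous_apply j))

theorem psd_smul {n : ℕ} {A : Matrix (Fin n) (Fin n) ℝ} (hA : A.PosSemidef)
    {a : ℝ} (ha : 0 ≤ a) : (a • A).PosSemidef := by
  refine .of_dotProduct_mulVec_nonneg ?_ fun x => ?_
  · unfold Matrix.IsHermitian
    rw [Matrix.conjTranspose_smul, hA.1]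
    simp
  · rw [Matrix.smul_mulVec, dotProduct_smul, smul_eq_mul]
    exact mul_nonneg ha (hA.dotProduct_mulVec_nonneg x)

end AuxLemmas

section PartA
variable {n : ℕ} (S : Matrix (Fin n) (Fin n) ℝ)

set_option maxHeartbeats 1000000 in
theorem partA_bdd (Ω : Matrix (Fin n) (Fin n) ℝ) (hsym : Ω.IsSymm)
    (hBdd : BddAbove {t : ℝ | 0 < t ∧ (1 + t • Ω).PosDef}) :
    Tendsto (fun t : ℝ => Matrix.trace (S * (1 + t • Ω)) - Real.log (1 + t • Ω).det)
      (nhdsWithin (sSup {t : ℝ | 0 < t ∧ (1 + t • Ω).PosDef})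
        {t : ℝ | 0 < t ∧ (1 + t • Ω).PosDef}) atTop := by
  classical
  set T : Set ℝ := {t : ℝ | 0 < t ∧ (1 + t • Ω).PosDef} with hT
  have h1 : Ωᴴ = Ω := by
    ext i j
    simpa [Matrix.conjTranspose_apply] using congrFun (congrFun hsym i) j
  have hherm : ∀ t : ℝ, (1 + t • Ω).IsHermitian := by
    intro t
    unfold Matrix.IsHermitian
    rw [Matrix.conjTranspose_add, Matrix.conjTranspose_smul, h1]
    simp
  have hquad : ∀ (t : ℝ) (x : Fin n → ℝ),
      x ⬝ᵥ ((1 + t • Ω) *ᵥ x) = x ⬝ᵥ x + t * (x ⬝ᵥ (Ω *ᵥ x)) := by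
    intro t x
    rw [Matrix.add_mulVec, Matrix.one_mulVec, Matrix.smul_mulVec,
      dotProduct_add, dotProduct_smul, smul_eq_mul]
  set C : ℝ := ∑ i, ∑ j, |Ω i j| with hC
  have hC0 : 0 ≤ C :=
    Finset.sum_nonneg fun i _ => Finset.sum_nonneg fun j _ => abs_nonneg _
  have habs : ∀ (x : Fin n → ℝ), |x ⬝ᵥ (Ω *ᵥ x)| ≤ C * (x ⬝ᵥ x) := fun x => quadform_abs_le Ω x
  have hsmall : ∀ t : ℝ, 0 < t → t * C < 1 → t ∈ T := by
    intro t ht htC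
    refine ⟨ht, .of_dotProduct_mulVec_pos (hherm t) fun x hx => ?_⟩
    rw [star_trivial, hquad]
    have hb := habs x
    have hd : 0 < x ⬝ᵥ x := dot_pos hx
    have h1 : -(C * (x ⬝ᵥ x)) ≤ x ⬝ᵥ (Ω *ᵥ x) := neg_le_of_abs_le hb
    nlinarith
  have hTne : T.Nonempty := by
    refine ⟨(C + 1)⁻¹ / 2, hsmall _ (by positivity) ?_⟩
    rw [div_mul_eq_mul_div, inv_mul_eq_div, div_div]
    rw [div_lt_one (by positivity)]
    nlinarith
  set ts : ℝ := sSup T with hts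
  have htsmem : ∀ t ∈ T, t ≤ ts := fun t ht => le_csSup hBdd ht
  have htspos : 0 < ts := lt_of_lt_of_le hTne.choose_spec.1 (htsmem _ hTne.choose_spec)
  have hdown : ∀ s t : ℝ, 0 < s → s ≤ t → t ∈ T → s ∈ T := by
    intro s t hs hst ht
    rcases eq_or_lt_of_le hst with rfl | hlt
    · exact ht
    refine ⟨hs, .of_dotProduct_mulVec_pos (hherm s) fun x hx => ?_⟩
    rw [star_trivial, hquad]
    have htpos : 0 < t := lt_trans hs hlt
    have hPD := ht.2.dotProduct_mulVec_pos hx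
    rw [star_trivial, hquad] at hPD
    have hd : 0 < x ⬝ᵥ x := dot_pos hx
    have key : x ⬝ᵥ x + s * (x ⬝ᵥ (Ω *ᵥ x)) =
        (1 - s / t) * (x ⬝ᵥ x) + (s / t) * (x ⬝ᵥ x + t * (x ⬝ᵥ (Ω *ᵥ x))) := by
      field_simp
      ring
    rw [key]
    have h1 : 0 < s / t := div_pos hs htpos
    have h2 : s / t < 1 := (div_lt_one htpos).mpr hlt
    nlinarith [mul_pos h1 hPD]
  have hIoo : Set.Ioo 0 ts ⊆ T := by
    intro s hs
    obtain ⟨t, htT, hst⟩ := exists_lt_of_lt_csSup hTne hs.2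
    exact hdown s t hs.1 hst.le htT
  have hpsd : (1 + ts • Ω).PosSemidef := by
    refine .of_dotProduct_mulVec_nonneg (hherm ts) fun x => ?_
    rw [star_trivial, hquad]
    by_contra hneg
    push_neg at hneg
    set v : ℝ := x ⬝ᵥ x + ts * (x ⬝ᵥ (Ω *ᵥ x)) with hv
    have hxne : x ≠ 0 := by
      intro h
      have hz : v = 0 := by rw [hv, h]; simp
      linarith
    set w : ℝ := |x ⬝ᵥ (Ω *ᵥ x)| with hw
    have hw0 : 0 ≤ w := abs_nonneg _
    have hwle : -w ≤ x ⬝ᵥ (Ω *ᵥ x) ∧ x ⬝ᵥ (Ω *ᵥ x) ≤ w := abs_le.mp (le_refl w)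
    set δ : ℝ := (-v) / (2 * (w + 1)) with hδ
    have hvneg : v < 0 := hneg
    have hδ0 : 0 < δ := by
      rw [hδ]
      have h' : 0 < -v := by linarith
      positivity
    have hδeq : δ * (2 * (w + 1)) = -v := by
      rw [hδ]; field_simp
    set t : ℝ := max (ts / 2) (ts - δ) with ht'
    have htlt : t < ts := by
      rw [ht']; exact max_lt (by linarith) (by linarith)
    have htpos : 0 < t := lt_of_lt_of_le (by linarith : (0:ℝ) < ts / 2) (le_max_left _ _)
    have htmem : t ∈ T := hIoo ⟨htpos, htlt⟩
    have hPD := htmem.2.dotProduct_mulVec_pos hxne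
    rw [star_trivial, hquad] at hPD
    have hdiff : ts - t ≤ δ := by
      have := le_max_right (ts / 2) (ts - δ)
      rw [ht']
      have h2 : ts - δ ≤ max (ts / 2) (ts - δ) := le_max_right _ _
      linarith
    have h2 : 0 ≤ ts - t := by linarith
    have hb1 : (ts - t) * (-w) ≤ (ts - t) * (x ⬝ᵥ (Ω *ᵥ x)) :=
      mul_le_mul_of_nonneg_left hwle.1 h2
    have hb2 : (ts - t) * w ≤ δ * w := mul_le_mul_of_nonneg_right hdiff hw0
    have hvt : x ⬝ᵥ x + t * (x ⬝ᵥ (Ω *ᵥ x)) = v - (ts - t) * (x ⬝ᵥ (Ω *ᵥ x)) := by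
      rw [hv]; ring
    rw [hvt] at hPD
    nlinarith
  have hdet0 : (1 + ts • Ω).det = 0 := by
    by_contra hdetne
    have hPD : (1 + ts • Ω).PosDef := posDef_of_psd_det hpsd hdetne
    obtain ⟨lam, hlam, hlow⟩ := posDef_lower hPD
    set t : ℝ := ts + lam / (2 * (C + 1)) with ht'
    have htgt : ts < t := by
      rw [ht']
      have : 0 < lam / (2 * (C + 1)) := by positivity
      linarith
    have htmem : t ∈ T := by
      refine ⟨by linarith, .of_dotProduct_mulVec_pos (hherm t) fun x hx => ?_⟩
      rw [star_trivial, hquad]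
      have hd : 0 < x ⬝ᵥ x := dot_pos hx
      have hlx := hlow x
      rw [hquad] at hlx
      have hwle : -( C * (x ⬝ᵥ x)) ≤ x ⬝ᵥ (Ω *ᵥ x) := neg_le_of_abs_le (habs x)
      have key : x ⬝ᵥ x + t * (x ⬝ᵥ (Ω *ᵥ x)) =
          (x ⬝ᵥ x + ts * (x ⬝ᵥ (Ω *ᵥ x))) + (t - ts) * (x ⬝ᵥ (Ω *ᵥ x)) := by ring
      rw [key]
      have hts' : t - ts = lam / (2 * (C + 1)) := by rw [ht']; ring
      have hfrac : (t - ts) * C < lam := by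
        rw [hts']
        rw [div_mul_eq_mul_div, div_lt_iff₀ (by positivity)]
        nlinarith
      have hb1 : (t - ts) * (-(C * (x ⬝ᵥ x))) ≤ (t - ts) * (x ⬝ᵥ (Ω *ᵥ x)) := by
        refine mul_le_mul_of_nonneg_left hwle ?_
        rw [hts']; positivity
      nlinarith [mul_pos hlam hd, mul_le_mul_of_nonneg_right hfrac.le hd.le]
    linarith [htsmem t htmem]
  -- tendsto
  have hcurve : Continuous fun t : ℝ => (1 : Matrix (Fin n) (Fin n) ℝ) + t • Ω :=
    continuous_const.add (continuous_id.smul continuous_const)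
  have htrace : Tendsto (fun t : ℝ => Matrix.trace (S * (1 + t • Ω)))
      (nhdsWithin ts T) (nhds (Matrix.trace (S * (1 + ts • Ω)))) := by
    exact (((cont_traceS S).comp hcurve).tendsto ts).mono_left nhdsWithin_le_nhds
  have hdet : Tendsto (fun t : ℝ => (1 + t • Ω).det) (nhdsWithin ts T)
      (nhdsWithin 0 (Set.Ioi 0)) := by
    rw [tendsto_nhdsWithin_iff]
    constructor
    · have := (hcurve.matrix_det.tendsto ts).mono_left
        (nhdsWithin_le_nhds (s := T))
      rwa [hdet0] at this
    · filter_upwards [eventually_mem_nhdsWithin] with t ht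
      exact ht.2.det_pos
  have hlog : Tendsto (fun t : ℝ => Real.log (1 + t • Ω).det) (nhdsWithin ts T) atBot :=
    Real.tendsto_log_nhdsGT_zero.comp hdet
  have hneg : Tendsto (fun t : ℝ => -Real.log (1 + t • Ω).det) (nhdsWithin ts T) atTop :=
    tendsto_neg_atBot_atTop.comp hlog
  have := htrace.add_atTop hneg
  simpa [sub_eq_add_neg] using this
end PartA

section PartA2
variable {n : ℕ} (S : Matrix (Fin n) (Fin n) ℝ)

set_option maxHeartbeats 1000000 in
theorem partA_unbdd (Ω : Matrix (Fin n) (Fin n) ℝ) (hsym : Ω.IsSymm) (hn : 0 < n)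
    (hnBdd : ¬ BddAbove {t : ℝ | 0 < t ∧ (1 + t • Ω).PosDef})
    (hpos : Ω.PosSemidef → 0 < Matrix.trace (S * Ω)) :
    Tendsto (fun t : ℝ => Matrix.trace (S * (1 + t • Ω)) - Real.log (1 + t • Ω).det)
      atTop atTop := by
  classical
  have h1 : Ωᴴ = Ω := by
    ext i j
    simpa [Matrix.conjTranspose_apply] using congrFun (congrFun hsym i) j
  have hquad : ∀ (t : ℝ) (x : Fin n → ℝ),
      x ⬝ᵥ ((1 + t • Ω) *ᵥ x) = x ⬝ᵥ x + t * (x ⬝ᵥ (Ω *ᵥ x)) := by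
    intro t x
    rw [Matrix.add_mulVec, Matrix.one_mulVec, Matrix.smul_mulVec,
      dotProduct_add, dotProduct_smul, smul_eq_mul]
  have hherm : ∀ t : ℝ, (1 + t • Ω).IsHermitian := by
    intro t
    unfold Matrix.IsHermitian
    rw [Matrix.conjTranspose_add, Matrix.conjTranspose_smul, h1]
    simp
  -- Ω is PSD
  have hpsd : Ω.PosSemidef := by
    refine .of_dotProduct_mulVec_nonneg h1 fun x => ?_
    rw [star_trivial]
    by_contra hneg
    push_neg at hneg
    have hxne : x ≠ 0 := by
      intro h; rw [h] at hneg; simp at hneg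
    have hd : 0 < x ⬝ᵥ x := dot_pos hxne
    apply hnBdd
    refine ⟨(x ⬝ᵥ x) / (-(x ⬝ᵥ (Ω *ᵥ x))), fun t ht => ?_⟩
    by_contra hgt
    push_neg at hgt
    have hPD := ht.2.dotProduct_mulVec_pos hxne
    rw [star_trivial, hquad] at hPD
    rw [div_lt_iff₀ (by linarith)] at hgt
    nlinarith
  have c₀pos : 0 < Matrix.trace (S * Ω) := hpos hpsd
  set c₀ : ℝ := Matrix.trace (S * Ω) with hc₀
  set N : ℝ := (n : ℝ) with hN
  have hN0 : (0:ℝ) < N := by rw [hN]; exact_mod_cast hn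
  set a : ℝ := Matrix.trace Ω with ha
  have ha0 : 0 ≤ a := by
    rw [ha, Matrix.trace]
    refine Finset.sum_nonneg fun i _ => ?_
    have := hpsd.dotProduct_mulVec_nonneg (Pi.single i 1)
    rw [star_trivial] at this
    simpa [dotProduct, Matrix.mulVec, Pi.single_apply, Finset.sum_ite_eq,
      Finset.mul_sum] using this
  have htr : ∀ t : ℝ, Matrix.trace (S * (1 + t • Ω)) = Matrix.trace (S * 1) + t * c₀ := by
    intro t
    rw [mul_add, Matrix.trace_add, Matrix.mul_smul, Matrix.trace_smul, smul_eq_mul, hc₀]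
  have hdetpd : ∀ t : ℝ, 0 ≤ t → (1 + t • Ω).PosDef := by
    intro t ht
    exact Matrix.PosDef.add_posSemidef Matrix.PosDef.one (psd_smul hpsd ht)
  have htrace1 : ∀ t : ℝ, 0 ≤ t → Matrix.trace (1 + t • Ω) = N + t * a := by
    intro t ht
    rw [Matrix.trace_add, Matrix.trace_smul, Matrix.trace_one, smul_eq_mul, hN, ha]
    simp [mul_comm]
  have hlogle : ∀ t : ℝ, 0 ≤ t →
      Real.log (1 + t • Ω).det ≤ N * Real.log (N + t * a) := by
    intro t ht
    have hd := (hdetpd t ht).det_pos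
    have hle : (1 + t • Ω).det ≤ (N + t * a) ^ n := by
      have := aux_det_le_trace_pow (hdetpd t ht).posSemidef
      rwa [htrace1 t ht] at this
    calc Real.log (1 + t • Ω).det ≤ Real.log ((N + t * a) ^ n) := Real.log_le_log hd hle
      _ = N * Real.log (N + t * a) := by rw [Real.log_pow]
  -- lower bound function
  set L : ℝ → ℝ := fun t => Matrix.trace (S * 1) + t * c₀ - N * Real.log (N + t * a) with hL
  have hLle : ∀ t : ℝ, 0 ≤ t →
      L t ≤ Matrix.trace (S * (1 + t • Ω)) - Real.log (1 + t • Ω).det := by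
    intro t ht
    rw [htr t, hL]
    simp only
    linarith [hlogle t ht]
  have hLtend : Tendsto L atTop atTop := by
    rcases eq_or_lt_of_le ha0 with haz | hap
    · -- a = 0
      have : L = fun t => (Matrix.trace (S * 1) - N * Real.log N) + c₀ * t := by
        funext t
        rw [hL, ← haz]
        simp only
        ring
      rw [this]
      exact tendsto_atTop_add_const_left _ _ (Tendsto.const_mul_atTop c₀pos tendsto_id)
    · -- a > 0
      have htend : Tendsto (fun t : ℝ => N + a * t) atTop atTop :=
        tendsto_atTop_add_const_left _ N (Tendsto.const_mul_atTop hap tendsto_id)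
      have hO : (fun t : ℝ => N + a * t) =O[atTop] (fun t : ℝ => t) := by
        rw [Asymptotics.isBigO_iff]
        refine ⟨N + a, ?_⟩
        filter_upwards [eventually_ge_atTop (1:ℝ)] with t ht
        rw [Real.norm_eq_abs, Real.norm_eq_abs, abs_of_nonneg (by nlinarith : (0:ℝ) ≤ N + a * t),
          abs_of_nonneg (by linarith : (0:ℝ) ≤ t)]
        nlinarith
      have hlittle : (fun t : ℝ => Real.log (N + a * t)) =o[atTop] (fun t : ℝ => t) := by
        have hcomp := Real.isLittleO_log_id_atTop.comp_tendsto htend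
        exact hcomp.trans_isBigO hO
      have hev : ∀ᶠ t : ℝ in atTop, N * Real.log (N + t * a) ≤ (c₀ / 2) * t := by
        have hc : (0:ℝ) < c₀ / (2 * N) := by positivity
        filter_upwards [(Asymptotics.isLittleO_iff.mp hlittle) hc,
          eventually_ge_atTop (0:ℝ)] with t hlt ht0
        rw [Real.norm_eq_abs, Real.norm_eq_abs, abs_of_nonneg ht0] at hlt
        have h2 : Real.log (N + a * t) ≤ c₀ / (2 * N) * t := (le_abs_self _).trans hlt
        rw [mul_comm a t] at h2
        calc N * Real.log (N + t * a) ≤ N * (c₀ / (2 * N) * t) :=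
              mul_le_mul_of_nonneg_left h2 hN0.le
          _ = (c₀ / 2) * t := by field_simp
      refine tendsto_atTop_mono' atTop ?_
        (tendsto_atTop_add_const_left _ (Matrix.trace (S * 1))
          (Tendsto.const_mul_atTop (by positivity : (0:ℝ) < c₀ / 2) tendsto_id))
      filter_upwards [hev] with t hevt
      rw [hL]
      simp only [id_eq]
      nlinarith [hevt]
  refine tendsto_atTop_mono' atTop ?_ hLtend
  filter_upwards [eventually_ge_atTop (0:ℝ)] with t ht
  exact hLle t ht
end PartA2

section Coercive
variable {n d : ℕ} (G : SimpleGraph (Fin n)) (q : Fin n → Fin (d + 1) → ℝ)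
    (S : Matrix (Fin n) (Fin n) ℝ)
    (hS : S = (Matrix.of fun (k : Fin (d + 1)) (i : Fin n) => q i k)ᵀ *
              (Matrix.of fun (k : Fin (d + 1)) (i : Fin n) => q i k))
    (hno : ¬ ∃ Ω : Matrix (Fin n) (Fin n) ℝ, Ω ≠ 0 ∧ Ω.PosSemidef ∧
      (∀ i j, i ≠ j → ¬ G.Adj i j → Ω i j = 0) ∧
      Ω * (Matrix.of fun (i : Fin n) (k : Fin (d + 1)) => q i k) = 0)

include hS hno in
theorem trace_S_pos {K : Matrix (Fin n) (Fin n) ℝ} (hK : K.PosSemidef)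
    (hsupp : ∀ i j, i ≠ j → ¬ G.Adj i j → K i j = 0) :
    (0 ≤ Matrix.trace (S * K)) ∧ (K ≠ 0 → 0 < Matrix.trace (S * K)) := by
  set Q : Matrix (Fin (d+1)) (Fin n) ℝ := Matrix.of fun k i => q i k with hQ
  have hQt : (Matrix.of fun (i : Fin n) (k : Fin (d + 1)) => q i k) = Qᵀ := by
    ext i k; simp [hQ]
  have h := trace_S_mul Q hK
  rw [← hS] at h
  refine ⟨h.1, fun hKne => ?_⟩
  rcases h.1.lt_or_eq with hlt | heq
  · exact hlt
  · exfalso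
    apply hno
    exact ⟨K, hKne, hK, hsupp, by rw [hQt]; exact h.2 heq.symm⟩

include hS hno in
theorem coercive : ∃ c > 0, ∀ K : Matrix (Fin n) (Fin n) ℝ, K.PosSemidef →
    (∀ i j, i ≠ j → ¬ G.Adj i j → K i j = 0) → c * ‖K‖ ≤ Matrix.trace (S * K) := by
  classical
  set Sp : Set (Matrix (Fin n) (Fin n) ℝ) :=
    {K | K.PosSemidef ∧ (∀ i j, i ≠ j → ¬ G.Adj i j → K i j = 0) ∧ ‖K‖ = 1} with hSp
  have hmem_of : ∀ K : Matrix (Fin n) (Fin n) ℝ, K.PosSemidef →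
      (∀ i j, i ≠ j → ¬ G.Adj i j → K i j = 0) → K ≠ 0 → (‖K‖⁻¹ • K) ∈ Sp := by
    intro K hK hsupp hKne
    have hn : ‖K‖ ≠ 0 := fun h => hKne (norm_eq_zero.mp h)
    refine ⟨psd_smul hK (inv_nonneg.mpr (norm_nonneg _)), fun i j h1 h2 => ?_, ?_⟩
    · show ‖K‖⁻¹ * K i j = 0
      rw [hsupp i j h1 h2, mul_zero]
    · rw [norm_smul]
      simp [abs_of_nonneg (inv_nonneg.mpr (norm_nonneg K)), inv_mul_cancel₀ hn]
  by_cases hne : Sp.Nonempty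
  · have hclosed : IsClosed Sp := by
      have : Sp = ({K : Matrix (Fin n) (Fin n) ℝ | K.PosSemidef} ∩
          {K | ∀ i j, i ≠ j → ¬ G.Adj i j → K i j = 0}) ∩ {K | ‖K‖ = 1} := by
        ext K; simp only [hSp, Set.mem_setOf_eq, Set.mem_inter_iff]; tauto
      rw [this]
      exact ((isClosed_psd.inter (isClosed_supp G)).inter
        (isClosed_eq continuous_norm continuous_const))
    have hbdd : Bornology.IsBounded Sp := by
      rw [Metric.isBounded_iff_subset_closedBall 0]
      exact ⟨1, fun K hK => by simp [Metric.mem_closedBall, dist_zero_right, hK.2.2.le]⟩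
    have hcomp : IsCompact Sp := Metric.isCompact_of_isClosed_isBounded hclosed hbdd
    obtain ⟨K₀, hK₀, hmin⟩ := hcomp.exists_isMinOn hne (cont_traceS S).continuousOn
    have hK₀ne : K₀ ≠ 0 := by
      intro h; rw [h] at hK₀; simpa using hK₀.2.2
    have hc : 0 < Matrix.trace (S * K₀) :=
      (trace_S_pos G q S hS hno hK₀.1 hK₀.2.1).2 hK₀ne
    refine ⟨Matrix.trace (S * K₀), hc, fun K hK hsupp => ?_⟩
    by_cases hKz : K = 0
    · simp [hKz]
    · have hmem := hmem_of K hK hsupp hKz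
      have := hmin hmem
      simp only [Set.mem_setOf_eq] at this
      rw [Matrix.mul_smul, Matrix.trace_smul, smul_eq_mul] at this
      have hnpos : 0 < ‖K‖ := norm_pos_iff.mpr hKz
      calc Matrix.trace (S * K₀) * ‖K‖ ≤ (‖K‖⁻¹ * Matrix.trace (S * K)) * ‖K‖ :=
            mul_le_mul_of_nonneg_right this hnpos.le
        _ = Matrix.trace (S * K) := by field_simp
  · refine ⟨1, one_pos, fun K hK hsupp => ?_⟩
    by_cases hKz : K = 0
    · simp [hKz]
    · exact absurd ⟨_, hmem_of K hK hsupp hKz⟩ hne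
set_option maxHeartbeats 1000000 in
include hS hno in
theorem partB (hn : 0 < n) :
    ∃ K : Matrix (Fin n) (Fin n) ℝ,
      (K.PosDef ∧ ∀ i j, i ≠ j → ¬ G.Adj i j → K i j = 0) ∧
      ∀ K' : Matrix (Fin n) (Fin n) ℝ,
        (K'.PosDef ∧ ∀ i j, i ≠ j → ¬ G.Adj i j → K' i j = 0) →
        Matrix.trace (S * K) - Real.log K.det ≤ Matrix.trace (S * K') - Real.log K'.det := by
  classical
  obtain ⟨c, hc, hcoer⟩ := coercive G q S hS hno
  set g : Matrix (Fin n) (Fin n) ℝ → ℝ :=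
    fun K => Matrix.trace (S * K) - Real.log K.det with hg
  set M : ℝ := Matrix.trace (S * 1) with hM
  have hsupp1 : ∀ i j : Fin n, i ≠ j → ¬ G.Adj i j → (1 : Matrix (Fin n) (Fin n) ℝ) i j = 0 :=
    fun i j hij _ => Matrix.one_apply_ne hij
  have hM0 : 0 ≤ M := (trace_S_pos G q S hS hno Matrix.PosSemidef.one hsupp1).1
  set N : ℝ := (n : ℝ) with hN
  have hN0 : (0:ℝ) < N := by rw [hN]; exact_mod_cast hn
  set D : ℝ := 2 * N * Real.sqrt N with hD
  have hD0 : 0 ≤ D := by positivity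
  set R : ℝ := max (2*M/c + D^2/c^2) 1 with hR
  -- key norm bound
  have hnormbd : ∀ K : Matrix (Fin n) (Fin n) ℝ, K.PosDef →
      (∀ i j, i ≠ j → ¬ G.Adj i j → K i j = 0) → g K ≤ M → ‖K‖ ≤ R := by
    intro K hK hsupp hgK
    have hKne : K ≠ 0 := by
      intro h
      have := hK.dotProduct_mulVec_pos (x := fun _ => 1) (by
        intro hz
        have := congrFun hz ⟨0, hn⟩
        simp at this)
      rw [h] at this
      simp [Matrix.zero_mulVec] at this
    have hnK : 0 < ‖K‖ := norm_pos_iff.mpr hKne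
    have hdet : 0 < K.det := hK.det_pos
    have htr : 0 < K.trace := by
      rw [aux_traceEig hK.1]
      exact Finset.sum_pos (fun i _ => hK.eigenvalues_pos i)
        (Finset.univ_nonempty_iff.mpr (Fin.pos_iff_nonempty.mp hn))
    have htrN : K.trace ≤ N * ‖K‖ := by
      calc K.trace = ∑ i, K i i := rfl
        _ ≤ ∑ _i : Fin n, ‖K‖ := by
            refine Finset.sum_le_sum fun i _ => ?_
            exact (le_abs_self _).trans (K.norm_entry_le_entrywise_sup_norm)
        _ = N * ‖K‖ := by simp [hN, mul_comm]
    have hlogdet : Real.log K.det ≤ N * Real.log (N * ‖K‖) := by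
      calc Real.log K.det ≤ Real.log (K.trace ^ n) :=
            Real.log_le_log hdet (aux_det_le_trace_pow hK.posSemidef)
        _ = N * Real.log K.trace := by rw [Real.log_pow, hN]
        _ ≤ N * Real.log (N * ‖K‖) := by
            refine mul_le_mul_of_nonneg_left ?_ hN0.le
            exact Real.log_le_log htr htrN
    have hkey : c * ‖K‖ ≤ M + D * Real.sqrt ‖K‖ := by
      have h1 : c * ‖K‖ ≤ Matrix.trace (S * K) := hcoer K hK.posSemidef hsupp
      have h2 : Matrix.trace (S * K) = g K + Real.log K.det := by rw [hg]; ring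
      have h3 : Real.log (N * ‖K‖) ≤ 2 * (Real.sqrt N * Real.sqrt ‖K‖) := by
        rw [← Real.sqrt_mul hN0.le]
        exact aux_log_le_two_sqrt (by positivity)
      calc c * ‖K‖ ≤ g K + Real.log K.det := h2 ▸ h1
        _ ≤ M + N * Real.log (N * ‖K‖) := add_le_add hgK hlogdet
        _ ≤ M + N * (2 * (Real.sqrt N * Real.sqrt ‖K‖)) := by
            refine add_le_add_right (mul_le_mul_of_nonneg_left h3 hN0.le) M
        _ = M + D * Real.sqrt ‖K‖ := by rw [hD]; ring
    -- conclude
    set y : ℝ := Real.sqrt ‖K‖ with hy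
    have hy2 : y^2 = ‖K‖ := Real.sq_sqrt (norm_nonneg K)
    have hkey2 : c * y^2 ≤ M + D * y := by rw [hy2]; exact hkey
    have : y^2 ≤ 2*M/c + D^2/c^2 := by
      rw [div_add_div _ _ (ne_of_gt hc) (ne_of_gt (pow_pos hc 2)),
        le_div_iff₀ (by positivity)]
      nlinarith [sq_nonneg (c*y - D)]
    rw [hy2] at this
    exact this.trans (le_max_left _ _)
  -- the compact domain
  set Dom : Set (Matrix (Fin n) (Fin n) ℝ) :=
    {K | K.PosSemidef ∧ (∀ i j, i ≠ j → ¬ G.Adj i j → K i j = 0) ∧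
      ‖K‖ ≤ R ∧ Real.exp (-M) ≤ K.det} with hDom
  have h1mem : (1 : Matrix (Fin n) (Fin n) ℝ) ∈ Dom := by
    refine ⟨Matrix.PosSemidef.one, hsupp1, ?_, ?_⟩
    · refine le_trans ?_ (le_max_right _ _)
      rw [Matrix.norm_le_iff zero_le_one]
      intro i j
      rcases eq_or_ne i j with rfl | hij
      · simp [Matrix.one_apply_eq]
      · simp [Matrix.one_apply_ne hij]
    · rw [Matrix.det_one]
      exact Real.exp_le_one_iff.mpr (neg_nonpos.mpr hM0)
  have hclosed : IsClosed Dom := by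
    have : Dom = ({K : Matrix (Fin n) (Fin n) ℝ | K.PosSemidef} ∩
        {K | ∀ i j, i ≠ j → ¬ G.Adj i j → K i j = 0}) ∩
        ({K | ‖K‖ ≤ R} ∩ {K | Real.exp (-M) ≤ K.det}) := by
      ext K; simp only [hDom, Set.mem_setOf_eq, Set.mem_inter_iff]; tauto
    rw [this]
    refine ((isClosed_psd.inter (isClosed_supp G)).inter (IsClosed.inter ?_ ?_))
    · exact isClosed_le continuous_norm continuous_const
    · exact isClosed_le continuous_const continuous_id.matrix_det
  have hbdd : Bornology.IsBounded Dom := by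
    rw [Metric.isBounded_iff_subset_closedBall 0]
    exact ⟨R, fun K hK => by
      simpa [Metric.mem_closedBall, dist_zero_right] using hK.2.2.1⟩
  have hcomp : IsCompact Dom := Metric.isCompact_of_isClosed_isBounded hclosed hbdd
  have hgcont : ContinuousOn g Dom := by
    refine ContinuousOn.sub (cont_traceS (n := n) S).continuousOn ?_
    intro K hK
    refine ContinuousAt.continuousWithinAt ?_
    have hdetne : K.det ≠ 0 := by
      have := hK.2.2.2
      have hexp : (0:ℝ) < Real.exp (-M) := Real.exp_pos _
      exact ne_of_gt (lt_of_lt_of_le hexp this)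
    exact (Real.continuousAt_log hdetne).comp continuous_id.matrix_det.continuousAt
  obtain ⟨K₀, hK₀, hmin⟩ := hcomp.exists_isMinOn ⟨1, h1mem⟩ hgcont
  have hK₀pd : K₀.PosDef := by
    refine posDef_of_psd_det hK₀.1 ?_
    exact ne_of_gt (lt_of_lt_of_le (Real.exp_pos _) hK₀.2.2.2)
  have hmemD : ∀ K' : Matrix (Fin n) (Fin n) ℝ, K'.PosDef →
      (∀ i j, i ≠ j → ¬ G.Adj i j → K' i j = 0) → g K' ≤ M → K' ∈ Dom := by
    intro K' hK' hsupp' hgK'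
    refine ⟨hK'.posSemidef, hsupp', hnormbd K' hK' hsupp' hgK', ?_⟩
    have htr0 : 0 ≤ Matrix.trace (S * K') :=
      (trace_S_pos G q S hS hno hK'.posSemidef hsupp').1
    have hlog : -M ≤ Real.log K'.det := by
      have : g K' = Matrix.trace (S * K') - Real.log K'.det := rfl
      linarith [hgK', htr0, this ▸ hgK']
    calc Real.exp (-M) ≤ Real.exp (Real.log K'.det) := Real.exp_le_exp.mpr hlog
      _ = K'.det := Real.exp_log hK'.det_pos
  refine ⟨K₀, ⟨hK₀pd, hK₀.2.1⟩, fun K' ⟨hK'pd, hK'supp⟩ => ?_⟩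
  by_cases h : g K' ≤ M
  · exact hmin (hmemD K' hK'pd hK'supp h)
  · have hg1 : g 1 = M := by
      rw [hg]; simp [Matrix.det_one, hM]
    have h1 : g K₀ ≤ M := hg1 ▸ hmin h1mem
    exact h1.trans (not_le.mp h).le

end Coercive


/-- If there is no nonzero PSD linear equilibrium stress matrix for the
configuration `q` (with Gram matrix `S = Qᵀ Q`), then for every symmetric `Ω` supported on
the diagonal and the edges of `G` with Frobenius norm one, `g(I + tΩ) → +∞` as `t`
approaches the supremum of `{t > 0 : I + tΩ ≻ 0}` (which may be infinite), and consequently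
the Gram MLT optimization problem has a global minimum. -/
theorem stmt2 (n d : ℕ) (G : SimpleGraph (Fin n))
    (q : Fin n → Fin (d + 1) → ℝ)
    (S : Matrix (Fin n) (Fin n) ℝ)
    (hS : S = (Matrix.of fun (k : Fin (d + 1)) (i : Fin n) => q i k)ᵀ *
              (Matrix.of fun (k : Fin (d + 1)) (i : Fin n) => q i k))
    (hno : ¬ ∃ Ω : Matrix (Fin n) (Fin n) ℝ, Ω ≠ 0 ∧ Ω.PosSemidef ∧
      (∀ i j, i ≠ j → ¬ G.Adj i j → Ω i j = 0) ∧
      Ω * (Matrix.of fun (i : Fin n) (k : Fin (d + 1)) => q i k) = 0) :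
    (∀ Ω : Matrix (Fin n) (Fin n) ℝ, Ω.IsSymm →
      (∀ i j, i ≠ j → ¬ G.Adj i j → Ω i j = 0) →
      Matrix.trace (Ω * Ω) = 1 →
      (BddAbove {t : ℝ | 0 < t ∧ (1 + t • Ω).PosDef} →
        Tendsto (fun t : ℝ => Matrix.trace (S * (1 + t • Ω)) - Real.log (1 + t • Ω).det)
          (nhdsWithin (sSup {t : ℝ | 0 < t ∧ (1 + t • Ω).PosDef})
            {t : ℝ | 0 < t ∧ (1 + t • Ω).PosDef}) atTop) ∧
      (¬ BddAbove {t : ℝ | 0 < t ∧ (1 + t • Ω).PosDef} →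
        Tendsto (fun t : ℝ => Matrix.trace (S * (1 + t • Ω)) - Real.log (1 + t • Ω).det)
          atTop atTop)) ∧
    (∃ K : Matrix (Fin n) (Fin n) ℝ,
      (K.PosDef ∧ ∀ i j, i ≠ j → ¬ G.Adj i j → K i j = 0) ∧
      ∀ K' : Matrix (Fin n) (Fin n) ℝ,
        (K'.PosDef ∧ ∀ i j, i ≠ j → ¬ G.Adj i j → K' i j = 0) →
        Matrix.trace (S * K) - Real.log K.det ≤ Matrix.trace (S * K') - Real.log K'.det) := by
  constructor
  · intro Ω hsym hsupp htr1
    have hΩne : Ω ≠ 0 := by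
      intro h
      rw [h] at htr1
      simp at htr1
    have hn : 0 < n := by
      rcases Nat.eq_zero_or_pos n with h | h
      · exfalso
        subst h
        rw [Matrix.trace] at htr1
        simp at htr1
      · exact h
    constructor
    · intro hBdd
      exact partA_bdd S Ω hsym hBdd
    · intro hnBdd
      exact partA_unbdd S Ω hsym hn hnBdd
        (fun hpsd => (trace_S_pos G q S hS hno hpsd hsupp).2 hΩne)
  · rcases Nat.eq_zero_or_pos n with hn | hn
    · subst hn
      refine ⟨1, ⟨Matrix.PosDef.one, fun i => i.elim0⟩, ?_⟩
      intro K' _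
      have hK' : K' = 1 := by
        ext i j
        exact i.elim0
      rw [hK']
    · exact partB G q S hS hno hn
end

section
/- Let C_n be the cycle on vertices 1,...,n and let (C_n, p) be a framework in R^1 with the points p(1),...,p(n) pairwise distinct, such that the edge {1,n} is backwards (p(1) < p(n)) and p(n) is the rightmost point. Then (C_n,p) has a one-dimensional space of equilibrium stresses, and there is an equilibrium stress ω such that ω_{i,i+1} > 0 for every forward edge (p(i) < p(i+1)) and ω_{i,i+1} < 0 for every backward edge (p(i) > p(i+1)), where indices are cyclic and the edge {1, n} has coefficient −1. -/
/-!
Writing `d i = p (i + 1) - p i` for the edge vectors, the equilibrium condition at vertex `i`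
reads `ω i * d i = ω (i - 1) * d (i - 1)`: the tension `ω i * d i` is the same constant `t` on
every edge of the cycle. As the points are distinct, `d i ≠ 0`, so the stresses are exactly
`ω i = t / d i`, a line. Taking `t = p last - p 0 > 0` gives `ω last = -1`, and `ω i` has the
sign of `d i`.
-/

/-- `ω` (assigning `ω i` to the cycle edge `{i, i+1}`, indices cyclic) is an equilibrium
stress of the one-dimensional cycle framework `(C_{n+3}, p)`. -/
def IsCycleEquilStress (n : ℕ) (p : Fin (n + 3) → ℝ) (ω : Fin (n + 3) → ℝ) : Prop :=
  ∀ i : Fin (n + 3), ω i * (p (i + 1) - p i) + ω (i - 1) * (p (i - 1) - p i) = 0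

lemma Fin.apply_eq_apply_zero_of_apply_add_one {α : Type*} {m : ℕ} (f : Fin (m + 1) → α)
    (h : ∀ i, f (i + 1) = f i) (i : Fin (m + 1)) : f i = f 0 := by
  induction i using Fin.induction with
  | zero => rfl
  | succ i ih => rw [← Fin.coeSucc_eq_succ, h, ih]

lemma sub_ne_zero_of_injective {m : ℕ} {p : Fin (m + 2) → ℝ} (hinj : Function.Injective p)
    (i : Fin (m + 2)) : p (i + 1) - p i ≠ 0 :=
  sub_ne_zero.2 (hinj.ne (by simp))

lemma isCycleEquilStress_iff_exists_tension {n : ℕ} {p ω : Fin (n + 3) → ℝ} :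
    IsCycleEquilStress n p ω ↔ ∃ t, ∀ i, ω i * (p (i + 1) - p i) = t := by
  constructor
  · intro hω
    refine ⟨_, Fin.apply_eq_apply_zero_of_apply_add_one
      (fun i => ω i * (p (i + 1) - p i)) fun i => ?_⟩
    have := hω (i + 1)
    simp only [add_sub_cancel_right] at this ⊢
    linarith
  · rintro ⟨t, ht⟩ i
    have h₁ := ht i
    have h₂ := ht (i - 1)
    rw [sub_add_cancel] at h₂
    linarith

lemma isCycleEquilStress_div {n : ℕ} {p : Fin (n + 3) → ℝ} (hinj : Function.Injective p)
    (t : ℝ) : IsCycleEquilStress n p fun i => t / (p (i + 1) - p i) :=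
  isCycleEquilStress_iff_exists_tension.2
    ⟨t, fun i => div_mul_cancel₀ _ (sub_ne_zero_of_injective hinj i)⟩

lemma IsCycleEquilStress.exists_eq_smul {n : ℕ} {p ω : Fin (n + 3) → ℝ}
    (hinj : Function.Injective p) (hω : IsCycleEquilStress n p ω) :
    ∃ t : ℝ, ω = t • fun i => 1 / (p (i + 1) - p i) := by
  obtain ⟨t, ht⟩ := isCycleEquilStress_iff_exists_tension.1 hω
  refine ⟨t, funext fun i => ?_⟩
  rw [Pi.smul_apply, smul_eq_mul, ← ht i, mul_one_div,
    mul_div_cancel_right₀ _ (sub_ne_zero_of_injective hinj i)]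

theorem stmt7_general (n : ℕ) (p : Fin (n + 3) → ℝ) (hinj : Function.Injective p)
    (hback : p 0 < p (Fin.last (n + 2))) :
    (∃ ω₀ : Fin (n + 3) → ℝ, ω₀ ≠ 0 ∧ IsCycleEquilStress n p ω₀ ∧
      ∀ ω : Fin (n + 3) → ℝ, IsCycleEquilStress n p ω → ∃ c : ℝ, ω = c • ω₀) ∧
    (∃ ω : Fin (n + 3) → ℝ, IsCycleEquilStress n p ω ∧
      ω (Fin.last (n + 2)) = -1 ∧
      (∀ i, p i < p (i + 1) → 0 < ω i) ∧
      (∀ i, p (i + 1) < p i → ω i < 0)) := by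
  refine ⟨⟨fun i => 1 / (p (i + 1) - p i), fun h => ?_, isCycleEquilStress_div hinj 1,
    fun ω hω => hω.exists_eq_smul hinj⟩, ?_⟩
  · simpa using sub_ne_zero_of_injective hinj 0 (by simpa using congrFun h 0)
  set t := p (Fin.last (n + 2)) - p 0
  have ht : 0 < t := sub_pos.2 hback
  refine ⟨fun i => t / (p (i + 1) - p i), isCycleEquilStress_div hinj t, ?_,
    fun i hi => div_pos ht (sub_pos.2 hi), fun i hi => div_neg_of_pos_of_neg ht (sub_neg.2 hi)⟩
  show t / (p (Fin.last (n + 2) + 1) - p (Fin.last (n + 2))) = -1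
  rw [Fin.last_add_one, ← neg_sub, div_neg, div_self ht.ne']

/-- For a cycle framework in `ℝ¹` with pairwise distinct points, where the
closing edge `{first, last}` is backwards (`p 0 < p last`) and `p last` is rightmost, the
space of equilibrium stresses is one-dimensional, and there is an equilibrium stress with
coefficient `-1` on the closing edge which is positive on every forwards edge and negative
on every backwards edge. -/
theorem stmt7 (n : ℕ) (p : Fin (n + 3) → ℝ) (hinj : Function.Injective p)
    (hback : p 0 < p (Fin.last (n + 2)))
    (hmax : ∀ i, p i ≤ p (Fin.last (n + 2))) :
    (∃ ω₀ : Fin (n + 3) → ℝ, ω₀ ≠ 0 ∧ IsCycleEquilStress n p ω₀ ∧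
      ∀ ω : Fin (n + 3) → ℝ, IsCycleEquilStress n p ω → ∃ c : ℝ, ω = c • ω₀) ∧
    (∃ ω : Fin (n + 3) → ℝ, IsCycleEquilStress n p ω ∧
      ω (Fin.last (n + 2)) = -1 ∧
      (∀ i, p i < p (i + 1) → 0 < ω i) ∧
      (∀ i, p (i + 1) < p i → ω i < 0)) :=
  stmt7_general n p hinj hback
end

section
/- Let 1 ≤ k ≤ d+1 and let the graph G be a k-sum of induced subgraphs G_1 and G_2 (i.e., G = G_1 ∪ G_2 and G_1 ∩ G_2 ≅ K_k). Let (G,p) be a d-dimensional framework in which the k vertices of G_1 ∩ G_2 are affinely independent. Let S be the space of equilibrium stresses of (G,p), and let S_i be the subspace of equilibrium stresses supported on the edges of G_i. Then S = S_1 ⊕ S_2. -/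
/-
A stress ω of G splits as ωA + (ω - ωA), where ωA keeps the edges of G not inside B. Then ωA
is supported on G₁ and ω - ωA on G₂, and ωA is in equilibrium except at the shared vertices
C = A ∩ B, where it exerts a load ℓ. This load is resolved by a stress μ on the complete graph
on C: by duality it suffices that ℓ is annihilated by every infinitesimal flex of the complete
framework on C, and since the points of C are affinely independent every such flex is the
restriction of a trivial motion x ↦ β x + b with β alternating, which does no work against the
load of any stress. Then ω₁ = ωA - μ and ω₂ = ω - ω₁. Conversely a stress in S₁ ∩ S₂ lives on
the complete graph on C, and its equilibrium at each vertex is an affine dependence among the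
affinely independent points of C, so it vanishes.
-/

/-- The subgraph of `G` induced on the vertex set `A` (kept on the same vertex type). -/
def restrictG {V : Type*} (G : SimpleGraph V) (A : Finset V) : SimpleGraph V where
  Adj u w := G.Adj u w ∧ u ∈ A ∧ w ∈ A
  symm := ⟨fun u w h => ⟨h.1.symm, h.2.2, h.2.1⟩⟩
  loopless := ⟨fun u h => G.loopless.irrefl u h.1⟩

/-- `ω` is an equilibrium stress of the `d`-dimensional framework `(G, p)`. -/
def IsStressOf {n : ℕ} (d : ℕ) (G : SimpleGraph (Fin n)) (p : Fin n → Fin d → ℝ)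
    (ω : Fin n → Fin n → ℝ) : Prop :=
  (∀ i j, ω i j = ω j i) ∧ (∀ i j, ¬ G.Adj i j → ω i j = 0) ∧
  (∀ i, ∑ j, ω i j • (p j - p i) = 0)

open Module

variable {E : Type*} [AddCommGroup E] [Module ℝ E]

lemma LinearIndependent.exists_dual_family {κ : Type*} [Fintype κ] [DecidableEq κ]
    {q : κ → E} (hq : LinearIndependent ℝ q) :
    ∃ ρ : κ → Dual ℝ E, ∀ j m, ρ j (q m) = if j = m then 1 else 0 := by
  obtain ⟨r, hr⟩ := LinearMap.exists_leftInverse_of_injective (Fintype.linearCombination ℝ q)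
    (LinearMap.ker_eq_bot.mpr hq.fintypeLinearCombination_injective)
  refine ⟨fun j => LinearMap.proj j ∘ₗ r, fun j m => ?_⟩
  have := congr($hr (Pi.single m 1) j)
  simpa [Fintype.linearCombination_apply_single, Pi.single_apply, eq_comm] using this

lemma LinearIndependent.exists_isAlt_bilinForm {κ : Type*} [Fintype κ] [DecidableEq κ]
    {q : κ → E} (hq : LinearIndependent ℝ q) {v : κ → Dual ℝ E}
    (hv : ∀ j m, v j (q m) + v m (q j) = 0) :
    ∃ B : LinearMap.BilinForm ℝ E, B.IsAlt ∧ ∀ m, B (q m) = v m := by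
  obtain ⟨ρ, hρ⟩ := hq.exists_dual_family
  -- halving the part of `v j` seen by `q` compensates for the antisymmetrisation defining `B`
  set t : κ → Dual ℝ E := fun j => v j - (1 / 2 : ℝ) • ∑ l, v j (q l) • ρ l
  have ht_apply : ∀ j y, t j y = v j y - 1 / 2 * ∑ l, v j (q l) * ρ l y := by simp [t]
  have ht_q : ∀ j m, t j (q m) = 1 / 2 * v j (q m) := by
    intro j m
    simp [ht_apply, hρ]
    ring
  refine ⟨∑ j, ((ρ j).smulRight (t j) - (t j).smulRight (ρ j)), fun x => ?_, fun m => ?_⟩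
  · simp [mul_comm]
  · ext y
    have hcancel : ∑ l, v m (q l) * ρ l y + ∑ l, v l (q m) * ρ l y = 0 := by
      simp [← Finset.sum_add_distrib, ← add_mul, hv]
    simp only [LinearMap.coe_sum, Finset.sum_apply, LinearMap.sub_apply, LinearMap.coe_smulRight,
      hρ, ite_smul, one_smul, zero_smul, ht_q, ht_apply, Finset.sum_sub_distrib, Finset.sum_ite_eq',
      Finset.mem_univ, if_true, LinearMap.smul_apply, smul_eq_mul]
    simp only [mul_assoc, ← Finset.mul_sum]
    linear_combination (-1 / 2 : ℝ) * hcancel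

lemma AffineIndependent.exists_trivial_motion {κ : Type*} [Fintype κ] {p : κ → E}
    (hp : AffineIndependent ℝ p) {u : κ → Dual ℝ E} (hu : ∀ i j, (u i - u j) (p i - p j) = 0) :
    ∃ (B : LinearMap.BilinForm ℝ E) (b : Dual ℝ E), B.IsAlt ∧ ∀ k, u k = B (p k) + b := by
  classical
  rcases isEmpty_or_nonempty κ with _ | ⟨⟨k₀⟩⟩
  · exact ⟨0, 0, fun _ => rfl, isEmptyElim⟩
  have hq : LinearIndependent ℝ fun j : {k // k ≠ k₀} => p j - p k₀ := by
    simpa only [vsub_eq_sub] using (affineIndependent_iff_linearIndependent_vsub ℝ p k₀).mp hp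
  have hv : ∀ j m : {k // k ≠ k₀},
      (u j - u k₀) (p m - p k₀) + (u m - u k₀) (p j - p k₀) = 0 := by
    intro j m
    have hj := hu j k₀
    have hm := hu m k₀
    have hjm := hu j m
    simp only [LinearMap.sub_apply, map_sub] at hj hm hjm ⊢
    linear_combination hj + hm - hjm
  obtain ⟨B, hB, hBq⟩ := hq.exists_isAlt_bilinForm hv
  refine ⟨B, u k₀ - B (p k₀), hB, fun k => ?_⟩
  by_cases hk : k = k₀
  · rw [hk, add_sub_cancel]
  · have := hBq ⟨k, hk⟩
    rw [map_sub] at this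
    rw [← add_sub_assoc, add_sub_right_comm, ← sub_eq_iff_eq_add, ← this]

lemma AffineIndependent.eq_zero_of_sum_smul_sub_eq_zero {κ : Type*} [Fintype κ] {p : κ → E}
    (hp : AffineIndependent ℝ p) {c : κ → ℝ} {i : κ} (h : ∑ j, c j • (p j - p i) = 0) {j : κ}
    (hj : j ≠ i) : c j = 0 := by
  classical
  have hli := (affineIndependent_iff_linearIndependent_vsub ℝ p i).mp hp
  rw [Fintype.sum_eq_add_sum_subtype_ne _ i, sub_self, smul_zero, zero_add] at h
  exact Fintype.linearIndependent_iff.mp hli (fun k => c k) h ⟨j, hj⟩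

section Frameworks

variable {ι : Type*}

def edgeWeights (H : SimpleGraph ι) : Submodule ℝ (ι → ι → ℝ) where
  carrier := {ω | (∀ i j, ω i j = ω j i) ∧ ∀ i j, ¬ H.Adj i j → ω i j = 0}
  add_mem' := by
    rintro ω ω' ⟨hs, hz⟩ ⟨hs', hz'⟩
    exact ⟨fun i j => by simp [hs i j, hs' i j], fun i j h => by simp [hz i j h, hz' i j h]⟩
  zero_mem' := ⟨fun _ _ => rfl, fun _ _ _ => rfl⟩
  smul_mem' := by
    rintro c ω ⟨hs, hz⟩
    exact ⟨fun i j => by simp [hs i j], fun i j h => by simp [hz i j h]⟩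

lemma edgeWeights_mono {H H' : SimpleGraph ι} (h : H ≤ H') : edgeWeights H ≤ edgeWeights H' :=
  fun _ ⟨hs, hz⟩ => ⟨hs, fun i j hij => hz i j fun hH => hij (h hH)⟩

lemma edgeWeights_inf (H H' : SimpleGraph ι) :
    edgeWeights (H ⊓ H') = edgeWeights H ⊓ edgeWeights H' := by
  refine le_antisymm (le_inf (edgeWeights_mono inf_le_left) (edgeWeights_mono inf_le_right)) ?_
  rintro ω ⟨⟨hs, hz⟩, -, hz'⟩
  refine ⟨hs, fun i j hij => ?_⟩
  by_cases h : H.Adj i j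
  · exact hz' i j fun h' => hij ⟨h, h'⟩
  · exact hz i j h

lemma restrictG_top_le {G : SimpleGraph ι} {A C : Finset ι} (hCA : C ⊆ A)
    (hC : ∀ i ∈ C, ∀ j ∈ C, i ≠ j → G.Adj i j) : restrictG ⊤ C ≤ restrictG G A :=
  fun i j ⟨hij, hi, hj⟩ => ⟨hC i hi j hj hij, hCA hi, hCA hj⟩

lemma restrictG_inf_restrictG_le [DecidableEq ι] (G : SimpleGraph ι) (A B : Finset ι) :
    restrictG G A ⊓ restrictG G B ≤ restrictG ⊤ (A ∩ B) :=
  fun _ _ ⟨⟨hij, hiA, hjA⟩, _, hiB, hjB⟩ =>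
    ⟨hij.ne, Finset.mem_inter.2 ⟨hiA, hiB⟩, Finset.mem_inter.2 ⟨hjA, hjB⟩⟩

lemma single_add_single_mem_edgeWeights [DecidableEq ι] {H : SimpleGraph ι} {i j : ι}
    (h : H.Adj i j) :
    Pi.single i (Pi.single j 1) + Pi.single j (Pi.single i 1) ∈ edgeWeights H := by
  refine ⟨fun x y => ?_, fun x y hxy => ?_⟩
  · simp only [Pi.add_apply, Pi.single_apply]
    split_ifs <;> simp_all
  · have : ¬(x = i ∧ y = j) ∧ ¬(x = j ∧ y = i) := by
      constructor <;> rintro ⟨rfl, rfl⟩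
      exacts [hxy h, hxy h.symm]
    simp only [Pi.add_apply, Pi.single_apply]
    split_ifs <;> simp_all

variable [Fintype ι]

def netForce (p : ι → E) : (ι → ι → ℝ) →ₗ[ℝ] ι → E where
  toFun ω i := ∑ j, ω i j • (p j - p i)
  map_add' ω ω' := by ext i; simp [add_smul, Finset.sum_add_distrib]
  map_smul' c ω := by ext i; simp [Finset.smul_sum, smul_smul]

@[simp]
lemma netForce_apply (p : ι → E) (ω : ι → ι → ℝ) (i : ι) :
    netForce p ω i = ∑ j, ω i j • (p j - p i) := rfl

lemma netForce_single_single [DecidableEq ι] (p : ι → E) (i j : ι) :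
    netForce p (Pi.single i (Pi.single j 1)) = Pi.single i (p j - p i) := by
  ext x : 1
  rcases eq_or_ne x i with rfl | hx
  · simp [Pi.single_apply]
  · simp [hx]

lemma sum_apply_netForce_eq_zero (p : ι → E) {ω : ι → ι → ℝ} (hω : ∀ i j, ω i j = ω j i)
    {w : ι → Dual ℝ E} (hw : ∀ i j, (w i - w j) (p i - p j) = 0) :
    ∑ i, w i (netForce p ω i) = 0 := by
  have hanti : ∀ i j, ω i j * w i (p j - p i) + ω j i * w j (p i - p j) = 0 := by
    intro i j
    have := hw i j
    simp only [LinearMap.sub_apply, map_sub] at this ⊢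
    rw [hω j i]
    linear_combination (-ω i j) * this
  have hsum : ∑ i, ∑ j, (ω i j * w i (p j - p i) + ω j i * w j (p i - p j)) = 0 :=
    Finset.sum_eq_zero fun i _ => Finset.sum_eq_zero fun j _ => hanti i j
  rw [Finset.sum_congr rfl fun i _ => Finset.sum_add_distrib, Finset.sum_add_distrib,
    Finset.sum_comm (f := fun i j => ω j i * w j (p i - p j))] at hsum
  simp only [netForce_apply, map_sum, map_smul, smul_eq_mul]
  linarith

lemma netForce_mem_map_edgeWeights [DecidableEq ι] {p : ι → E} {C : Finset ι}
    (hp : AffineIndependent ℝ fun i : C => p i) {ω : ι → ι → ℝ} (hω : ∀ i j, ω i j = ω j i)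
    (hC : ∀ i ∉ C, netForce p ω i = 0) :
    netForce p ω ∈ (edgeWeights (restrictG ⊤ C)).map (netForce p) := by
  rw [← Subspace.forall_mem_dualAnnihilator_apply_eq_zero_iff]
  intro φ hφ
  rw [Submodule.mem_dualAnnihilator] at hφ
  set u : ι → Dual ℝ E := fun i => φ ∘ₗ LinearMap.single ℝ (fun _ => E) i
  have hφu : ∀ f : ι → E, φ f = ∑ i, u i (f i) := by
    intro f
    conv_lhs => rw [← Finset.univ_sum_single f]
    simp [u]
  have hflex : ∀ i j : C, (u i - u j) (p i - p j) = 0 := by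
    intro i j
    rcases eq_or_ne i j with rfl | hij
    · simp
    have hij' : (i : ι) ≠ j := Subtype.coe_ne_coe.mpr hij
    have hedge := single_add_single_mem_edgeWeights (H := restrictG ⊤ C)
      (show (restrictG ⊤ C).Adj i j from ⟨hij', i.2, j.2⟩)
    have := hφ _ (Submodule.mem_map_of_mem hedge)
    rw [map_add, map_add, netForce_single_single, netForce_single_single] at this
    change u i (p j - p i) + u j (p i - p j) = 0 at this
    simp only [LinearMap.sub_apply, map_sub] at this ⊢
    linarith
  obtain ⟨B, b, hB, hub⟩ := hp.exists_trivial_motion hflex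
  have hw : ∀ i j, ((B (p i) + b) - (B (p j) + b)) (p i - p j) = 0 := by
    intro i j
    rw [add_sub_add_right_eq_sub, ← map_sub, hB.self_eq_zero]
  rw [hφu, ← sum_apply_netForce_eq_zero p hω hw]
  refine Finset.sum_congr rfl fun i _ => ?_
  by_cases hi : i ∈ C
  · rw [show u i = _ from hub ⟨i, hi⟩]
  · simp [hC i hi]

lemma eq_zero_of_mem_edgeWeights_of_netForce_eq_zero {p : ι → E} {C : Finset ι}
    (hp : AffineIndependent ℝ fun i : C => p i) {ω : ι → ι → ℝ}
    (hω : ω ∈ edgeWeights (restrictG ⊤ C)) (hf : netForce p ω = 0) : ω = 0 := by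
  ext i j
  by_contra hne
  have hadj : (restrictG ⊤ C).Adj i j := by_contra fun h => hne (hω.2 i j h)
  obtain ⟨hij, hi, hj⟩ := hadj
  have hsum : ∑ l : C, ω i l • (p l - p (⟨i, hi⟩ : C)) = 0 := by
    have hfi : netForce p ω i = 0 := congrFun hf i
    rw [Finset.sum_coe_sort C fun l => ω i l • (p l - p i), ← hfi, netForce_apply]
    refine Finset.sum_subset (Finset.subset_univ C) fun l _ hl => ?_
    rw [hω.2 i l fun h => hl h.2.2, zero_smul]
  exact hne (hp.eq_zero_of_sum_smul_sub_eq_zero hsum (j := ⟨j, hj⟩)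
    (Subtype.coe_ne_coe.mp hij.symm))

lemma exists_stress_split_of_kSum [DecidableEq ι] {G : SimpleGraph ι} {A B : Finset ι}
    (hedges : ∀ i j, G.Adj i j → (i ∈ A ∧ j ∈ A) ∨ (i ∈ B ∧ j ∈ B))
    (hcomplete : ∀ i ∈ A ∩ B, ∀ j ∈ A ∩ B, i ≠ j → G.Adj i j) {p : ι → E}
    (hp : AffineIndependent ℝ fun i : ↥(A ∩ B) => p i) {ω : ι → ι → ℝ}
    (hω : ω ∈ edgeWeights G) (hf : netForce p ω = 0) :
    ∃ ω₁ ∈ edgeWeights (restrictG G A),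
      netForce p ω₁ = 0 ∧ ω - ω₁ ∈ edgeWeights (restrictG G B) := by
  have hKA := edgeWeights_mono (restrictG_top_le Finset.inter_subset_left hcomplete)
  have hKB := edgeWeights_mono (restrictG_top_le Finset.inter_subset_right hcomplete)
  set ωA : ι → ι → ℝ := fun i j => if i ∈ B ∧ j ∈ B then 0 else ω i j
  have hωA : ωA ∈ edgeWeights (restrictG G A) := by
    refine ⟨fun i j => by simp only [ωA, and_comm, hω.1 i j], fun i j hij => ?_⟩
    simp only [ωA]
    split_ifs with hB
    · rfl
    · exact hω.2 i j fun hG => (hedges i j hG).elim (fun hA => hij ⟨hG, hA⟩) hB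
  have hωB : ω - ωA ∈ edgeWeights (restrictG G B) := by
    refine ⟨fun i j => by simp only [Pi.sub_apply, ωA, and_comm, hω.1 i j], fun i j hij => ?_⟩
    simp only [Pi.sub_apply, ωA]
    split_ifs with hB
    · rw [sub_zero]
      exact hω.2 i j fun hG => hij ⟨hG, hB⟩
    · exact sub_self _
  have hforce : ∀ i ∉ A ∩ B, netForce p ωA i = 0 := by
    intro i hi
    by_cases hiB : i ∈ B
    · refine Finset.sum_eq_zero fun j _ => ?_
      have hiA : i ∉ A := fun hiA => hi (Finset.mem_inter.2 ⟨hiA, hiB⟩)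
      have : ωA i j = 0 := by
        simp only [ωA]
        split_ifs with h
        · rfl
        · exact hω.2 i j fun hG =>
            (hedges i j hG).elim (fun hA => hiA hA.1) (fun hB => h ⟨hiB, hB.2⟩)
      rw [this, zero_smul]
    · have : ∀ j, ωA i j = ω i j := fun j => if_neg fun h => hiB h.1
      simp only [netForce_apply, this]
      exact congrFun hf i
  obtain ⟨μ, hμ, hμf⟩ := netForce_mem_map_edgeWeights hp hωA.1 hforce
  refine ⟨ωA - μ, sub_mem hωA (hKA hμ), by rw [map_sub, hμf, sub_self], ?_⟩
  rw [sub_sub_eq_add_sub, add_sub_right_comm]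
  exact add_mem hωB (hKB hμ)

end Frameworks

lemma isStressOf_iff {n d : ℕ} {G : SimpleGraph (Fin n)} {p : Fin n → Fin d → ℝ}
    {ω : Fin n → Fin n → ℝ} :
    IsStressOf d G p ω ↔ ω ∈ edgeWeights G ∧ netForce p ω = 0 :=
  ⟨fun ⟨hs, hz, hf⟩ => ⟨⟨hs, hz⟩, funext hf⟩, fun ⟨⟨hs, hz⟩, hf⟩ => ⟨hs, hz, congrFun hf⟩⟩

theorem stmt10_general (n d : ℕ)
    (G : SimpleGraph (Fin n)) (A B : Finset (Fin n))
    (hedges : ∀ i j, G.Adj i j → (i ∈ A ∧ j ∈ A) ∨ (i ∈ B ∧ j ∈ B))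
    (hcomplete : ∀ i ∈ A ∩ B, ∀ j ∈ A ∩ B, i ≠ j → G.Adj i j)
    (p : Fin n → Fin d → ℝ)
    (haff : AffineIndependent ℝ (fun i : ↥(A ∩ B) => p i)) :
    (∀ ω : Fin n → Fin n → ℝ, IsStressOf d G p ω →
      ∃ ω₁ ω₂ : Fin n → Fin n → ℝ,
        IsStressOf d (restrictG G A) p ω₁ ∧ IsStressOf d (restrictG G B) p ω₂ ∧
        ω = ω₁ + ω₂) ∧
    (∀ ω₁ ω₂ : Fin n → Fin n → ℝ,
      IsStressOf d (restrictG G A) p ω₁ → IsStressOf d (restrictG G B) p ω₂ →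
      ω₁ + ω₂ = 0 → ω₁ = 0 ∧ ω₂ = 0) := by
  simp only [isStressOf_iff]
  refine ⟨fun ω ⟨hω, hf⟩ => ?_, fun ω₁ ω₂ ⟨h₁, hf₁⟩ ⟨h₂, _⟩ hsum => ?_⟩
  · obtain ⟨ω₁, h₁, hf₁, h₂⟩ := exists_stress_split_of_kSum hedges hcomplete haff hω hf
    exact ⟨ω₁, ω - ω₁, ⟨h₁, hf₁⟩, ⟨h₂, by rw [map_sub, hf, hf₁, sub_zero]⟩,
      (add_sub_cancel ω₁ ω).symm⟩
  · have hω₂ : ω₂ = -ω₁ := eq_neg_of_add_eq_zero_right hsum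
    have hK : ω₁ ∈ edgeWeights (restrictG ⊤ (A ∩ B)) := by
      refine edgeWeights_mono (restrictG_inf_restrictG_le G A B) ?_
      rw [edgeWeights_inf]
      exact ⟨h₁, by simpa [hω₂] using neg_mem h₂⟩
    have h₁0 := eq_zero_of_mem_edgeWeights_of_netForce_eq_zero haff hK hf₁
    exact ⟨h₁0, by rw [hω₂, h₁0, neg_zero]⟩

/-- If `1 ≤ k ≤ d+1` and `G` is a `k`-sum of induced subgraphs `G₁` (on `A`)
and `G₂` (on `B`), and `(G,p)` is a `d`-dimensional framework whose `k` shared vertices are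
affinely independent, then the space of equilibrium stresses of `(G,p)` is the direct sum
of the subspaces of stresses supported on the edges of `G₁` and of `G₂`. -/
theorem stmt10 (n d k : ℕ) (hk1 : 1 ≤ k) (hk2 : k ≤ d + 1)
    (G : SimpleGraph (Fin n)) (A B : Finset (Fin n))
    (hcover : A ∪ B = Finset.univ)
    (hcard : (A ∩ B).card = k)
    (hA : k + 1 ≤ A.card) (hB : k + 1 ≤ B.card)
    (hedges : ∀ i j, G.Adj i j → (i ∈ A ∧ j ∈ A) ∨ (i ∈ B ∧ j ∈ B))
    (hcomplete : ∀ i ∈ A ∩ B, ∀ j ∈ A ∩ B, i ≠ j → G.Adj i j)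
    (p : Fin n → Fin d → ℝ)
    (haff : AffineIndependent ℝ (fun i : ↥(A ∩ B) => p i)) :
    (∀ ω : Fin n → Fin n → ℝ, IsStressOf d G p ω →
      ∃ ω₁ ω₂ : Fin n → Fin n → ℝ,
        IsStressOf d (restrictG G A) p ω₁ ∧ IsStressOf d (restrictG G B) p ω₂ ∧
        ω = ω₁ + ω₂) ∧
    (∀ ω₁ ω₂ : Fin n → Fin n → ℝ,
      IsStressOf d (restrictG G A) p ω₁ → IsStressOf d (restrictG G B) p ω₂ →
      ω₁ + ω₂ = 0 → ω₁ = 0 ∧ ω₂ = 0) :=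
  stmt10_general n d G A B hedges hcomplete p haff
end

section
/- Let m, n, d ∈ N with m, n ≥ d+2 and m + n ≤ binom(d+2, 2). If (K_{m,n}, p) is a generic d-dimensional framework on the complete bipartite graph, then every equilibrium stress matrix of (K_{m,n}, p) has all diagonal entries equal to zero; consequently every nonzero equilibrium stress matrix of (K_{m,n}, p) is indefinite (neither PSD nor NSD). -/
/-!
Homogenize the points, `q v = (p v, 1)`. Equilibrium together with the zero row sums says
`Ω Q = 0`, where `Q` has rows `q v`. With `S = diag(±1)` recording the two sides of `K_{m,n}`,
every off-diagonal entry of `Ω` joins opposite sides, so `S Ω + Ω S = 2 S diag Ω` and hence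
`Qᵀ (S diag Ω) Q = 0`, i.e. `∑ ±Ω_vv q_v q_vᵀ = 0`.

Bolker–Roth: for generic `p` and at most `C(d+2, 2)` points the `q_v q_vᵀ` are linearly
independent. Pad the Veronese matrix of the points to a square matrix; its determinant is a
polynomial in the coordinates that is nonzero at an explicit rational configuration, so it does not
vanish at algebraically independent points. Thus `diag Ω = 0`, and a semidefinite matrix with zero
trace is zero.
-/

open Matrix Finset

section Veronese

variable {K R : Type*}

def veronese [CommMonoid R] (y : K → R) : Sym2 K → R := fun t => (t.map y).mul

@[simp] lemma veronese_mk [CommMonoid R] (y : K → R) (a b : K) :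
    veronese y s(a, b) = y a * y b := rfl

lemma map_veronese {S F : Type*} [CommMonoid R] [CommMonoid S] [FunLike F R S]
    [MulHomClass F R S] (φ : F) (y : K → R) (t : Sym2 K) :
    φ (veronese y t) = veronese (φ ∘ y) t := by
  induction t using Sym2.ind with
  | _ a b => simp

lemma sum_veronese_mul_eq_sum_sym2 [Fintype K] [CommSemiring R] (y : K → R) (S : Finset K)
    (hy : ∀ k ∉ S, y k = 0) (c : Sym2 K → R) :
    ∑ t, veronese y t * c t = ∑ t ∈ S.sym2, veronese y t * c t := by
  refine (sum_subset (subset_univ _) fun t _ ht => ?_).symm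
  induction t using Sym2.ind with
  | _ a b =>
    rw [mk_mem_sym2_iff, not_and_or] at ht
    rcases ht with ha | hb <;> simp [*]

end Veronese

lemma Finset.sum_sym2_insert {α M : Type*} [DecidableEq α] [AddCommMonoid M] {a : α}
    {s : Finset α} (ha : a ∉ s) (f : Sym2 α → M) :
    ∑ t ∈ (insert a s).sym2, f t = ∑ b ∈ insert a s, f s(a, b) + ∑ t ∈ s.sym2, f t := by
  rw [← cons_eq_insert _ _ ha, sym2_cons, sum_disjUnion, sum_map]
  rfl

def homogenize {κ R : Type*} [One R] (x : κ → R) : Option κ → R := fun o => o.elim 1 x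

@[simp] lemma homogenize_none {κ R : Type*} [One R] (x : κ → R) : homogenize x none = 1 := rfl
@[simp] lemma homogenize_some {κ R : Type*} [One R] (x : κ → R) (k : κ) :
    homogenize x (some k) = x k := rfl

lemma comp_homogenize {κ R S F : Type*} [One R] [One S] [FunLike F R S] [OneHomClass F R S]
    (φ : F) (x : κ → R) : φ ∘ homogenize x = homogenize (φ ∘ x) := by
  funext o
  cases o <;> simp

section SpecialPoints

variable {κ : Type*} [DecidableEq κ]

/-- `s(a, b) ↦ e a + e b`, where `e none = 0` and `e (some k)` is the `k`-th unit vector. -/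
def specialPoint : Sym2 (Option κ) → κ → ℚ :=
  Sym2.lift ⟨fun a b k => (if a = some k then 1 else 0) + (if b = some k then 1 else 0),
    fun _ _ => funext fun _ => add_comm _ _⟩

@[simp] lemma specialPoint_mk (a b : Option κ) (k : κ) :
    specialPoint s(a, b) k = (if a = some k then 1 else 0) + (if b = some k then 1 else 0) := rfl

lemma eq_zero_of_forall_sum_veronese_specialPoint_mul_eq_zero [Fintype κ]
    (c : Sym2 (Option κ) → ℚ)
    (hc : ∀ s, ∑ t, veronese (homogenize (specialPoint s)) t * c t = 0) : c = 0 := by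
  have hvanish (a b : Option κ) (S : Finset (Option κ)) (ha : a ∈ S) (hb : b ∈ S)
      (hn : none ∈ S) : ∀ k ∉ S, homogenize (specialPoint s(a, b)) k = 0 := by
    rintro (_ | k) hk
    · exact absurd hn hk
    · have : a ≠ some k := by rintro rfl; exact hk ha
      have : b ≠ some k := by rintro rfl; exact hk hb
      simp [*]
  have h₀ : c s(none, none) = 0 := by
    have h := hc s(none, none)
    rw [sum_veronese_mul_eq_sum_sym2 _ _ (hvanish _ _ {none} (by simp) (by simp) (by simp))] at h
    simpa [Sym2.diag] using h
  have h₁ : ∀ a, c s(some a, some a) = 0 ∧ c s(some a, none) = 0 := by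
    intro a
    have h := hc s(some a, none)
    have h' := hc s(some a, some a)
    rw [sum_veronese_mul_eq_sum_sym2 _ _
      (hvanish _ _ {some a, none} (by simp) (by simp) (by simp))] at h h'
    simp [sum_sym2_insert, Sym2.diag, h₀] at h h'
    -- the points `e a` and `2 e a` give `x + y = 0` and `4 x + 2 y = 0`
    constructor <;> linarith
  have h₂ : ∀ a b, a ≠ b → c s(some a, some b) = 0 := by
    intro a b hab
    have h := hc s(some a, some b)
    rw [sum_veronese_mul_eq_sum_sym2 _ _
      (hvanish _ _ {some a, some b, none} (by simp) (by simp) (by simp))] at h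
    simpa [sum_sym2_insert, Sym2.diag, hab, hab.symm, h₀, h₁] using h
  funext t
  induction t using Sym2.ind with
  | _ a b =>
    rcases a with _ | a <;> rcases b with _ | b
    · exact h₀
    · rw [Sym2.eq_swap]; exact (h₁ b).2
    · exact (h₁ a).2
    · obtain rfl | hab := eq_or_ne a b
      · exact (h₁ a).1
      · exact h₂ a b hab

end SpecialPoints

section VeroneseMatrix

variable {ι κ R : Type*}

def veroneseMatrix [CommRing R] (x : ι → κ → R) : Matrix ι (Sym2 (Option κ)) R :=
  of fun i => veronese (homogenize (x i))

@[simp] lemma veroneseMatrix_apply [CommRing R] (x : ι → κ → R) (i : ι) :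
    veroneseMatrix x i = veronese (homogenize (x i)) := rfl

lemma veroneseMatrix_map {S F : Type*} [CommRing R] [CommRing S] [FunLike F R S]
    [RingHomClass F R S] (φ : F) (x : ι → κ → R) :
    (veroneseMatrix x).map φ = veroneseMatrix fun i => φ ∘ x i := by
  ext i t
  simp [veroneseMatrix, map_veronese, comp_homogenize]

lemma det_veroneseMatrix_specialPoint_ne_zero [Fintype κ] [DecidableEq κ] :
    (veroneseMatrix (specialPoint (κ := κ))).det ≠ 0 := by
  intro h
  obtain ⟨c, hc, hWc⟩ := exists_mulVec_eq_zero_iff.mpr h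
  refine hc (eq_zero_of_forall_sum_veronese_specialPoint_mul_eq_zero c fun s => ?_)
  simpa [mulVec, dotProduct, veroneseMatrix] using congrFun hWc s

theorem linearIndependent_veronese_homogenize [Fintype ι] [Fintype κ] [DecidableEq κ]
    (hcard : Fintype.card ι ≤ Fintype.card (Sym2 (Option κ))) (p : ι → κ → ℝ)
    (hp : AlgebraicIndependent ℚ fun x : ι × κ => p x.1 x.2) :
    LinearIndependent ℝ fun v => veronese (homogenize (p v)) := by
  classical
  obtain ⟨σ⟩ := Function.Embedding.nonempty_of_card_le hcard
  -- generic points on the image of `σ`, special points elsewhere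
  let P : Sym2 (Option κ) → κ → MvPolynomial (ι × κ) ℚ :=
    Function.extend σ (fun v k => MvPolynomial.X (v, k))
      fun s k => MvPolynomial.C (specialPoint s k)
  have hPσ (v : ι) : P (σ v) = fun k => MvPolynomial.X (v, k) := σ.injective.extend_apply _ _ v
  let ev₀ : MvPolynomial (ι × κ) ℚ →ₐ[ℚ] ℚ :=
    MvPolynomial.aeval fun x : ι × κ => specialPoint (σ x.1) x.2
  let evp : MvPolynomial (ι × κ) ℚ →ₐ[ℚ] ℝ :=
    MvPolynomial.aeval fun x : ι × κ => p x.1 x.2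
  have hev₀ : (fun s => ev₀ ∘ P s) = specialPoint := by
    funext s k
    by_cases hs : ∃ v, σ v = s
    · obtain ⟨v, rfl⟩ := hs
      simp [hPσ, ev₀]
    · simp [P, Function.extend_apply' _ _ _ hs, ev₀]
  have hdet : (veroneseMatrix P).det ≠ 0 := by
    intro h
    apply det_veroneseMatrix_specialPoint_ne_zero (κ := κ)
    rw [← hev₀, ← veroneseMatrix_map, ← AlgHom.mapMatrix_apply, ← AlgHom.map_det, h,
      map_zero]
  have hdetp : (veroneseMatrix fun s => evp ∘ P s).det ≠ 0 := by
    rw [← veroneseMatrix_map, ← AlgHom.mapMatrix_apply, ← AlgHom.map_det]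
    exact fun h => hdet (hp (h.trans (map_zero evp).symm))
  have hrows : (fun v => veronese (homogenize (p v))) =
      fun v => veroneseMatrix (fun s => evp ∘ P s) (σ v) := by
    funext v
    simp [hPσ, evp, Function.comp_def]
  rw [hrows]
  exact (linearIndependent_rows_of_det_ne_zero hdetp).comp σ σ.injective

end VeroneseMatrix

section Stress

variable {V R : Type*} [Fintype V] [DecidableEq V] [CommRing R]

lemma diagonal_mul_add_mul_diagonal_of_signed_support {Ω : Matrix V V R} {s : V → R}
    (hs : ∀ i j, i ≠ j → Ω i j ≠ 0 → s j = -s i) :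
    diagonal s * Ω + Ω * diagonal s = diagonal fun v => 2 * s v * Ω v v := by
  ext i j
  rw [Matrix.add_apply, diagonal_mul, mul_diagonal, diagonal_apply]
  split_ifs with hij
  · subst hij; ring
  · by_cases h : Ω i j = 0
    · simp [h]
    · rw [hs i j hij h]; ring

lemma transpose_mul_diagonal_mul_eq_zero {K : Type*} [Fintype K] {Ω : Matrix V V R}
    (hΩ : Ω.IsSymm) {s : V → R} (hs : ∀ i j, i ≠ j → Ω i j ≠ 0 → s j = -s i)
    {Q : Matrix V K R} (hQ : Ω * Q = 0) :
    Qᵀ * diagonal (fun v => 2 * s v * Ω v v) * Q = 0 := by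
  have hQ' : Qᵀ * Ω = 0 := by
    rw [← hΩ.eq, ← transpose_mul, hQ, transpose_zero]
  rw [← diagonal_mul_add_mul_diagonal_of_signed_support hs, Matrix.mul_add, Matrix.add_mul,
    ← Matrix.mul_assoc Qᵀ (diagonal s), Matrix.mul_assoc _ Ω Q, hQ, ← Matrix.mul_assoc Qᵀ Ω,
    hQ']
  simp

lemma sum_smul_veronese_apply_mk {K : Type*} (Q : Matrix V K R) (w : V → R) (a b : K) :
    (∑ v, w v • veronese (Q v)) s(a, b) = (Qᵀ * diagonal w * Q) a b := by
  simp only [Finset.sum_apply, Pi.smul_apply, veronese_mk, smul_eq_mul, mul_apply (M := _ * _),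
    mul_diagonal, transpose_apply]
  exact sum_congr rfl fun v _ => by ring

lemma sum_smul_veronese_eq_zero {K : Type*} {Q : Matrix V K R} {w : V → R}
    (h : Qᵀ * diagonal w * Q = 0) : ∑ v, w v • veronese (Q v) = 0 := by
  funext t
  induction t using Sym2.ind with
  | _ a b => rw [sum_smul_veronese_apply_mk, h, Matrix.zero_apply, Pi.zero_apply]

end Stress

theorem stmt12_general (m n d : ℕ)
    (hsum : m + n ≤ Nat.choose (d + 2) 2)
    (p : Fin m ⊕ Fin n → Fin d → ℝ)
    (hgen : AlgebraicIndependent ℚ (fun x : (Fin m ⊕ Fin n) × Fin d => p x.1 x.2))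
    (Ω : Matrix (Fin m ⊕ Fin n) (Fin m ⊕ Fin n) ℝ)
    (hherm : Ω.IsHermitian)
    (hsupp : ∀ i j, i ≠ j → ¬ (completeBipartiteGraph (Fin m) (Fin n)).Adj i j → Ω i j = 0)
    (hrow : ∀ i, ∑ j, Ω i j = 0)
    (hequil : ∀ i, ∑ j, Ω i j • p j = 0) :
    (∀ i, Ω i i = 0) ∧ (Ω ≠ 0 → ¬ Ω.PosSemidef ∧ ¬ (-Ω).PosSemidef) := by
  have hstress : Ω * of (fun v => homogenize (p v)) = 0 := by
    ext i (_ | k)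
    · simpa [mul_apply] using hrow i
    · simpa [mul_apply, Finset.sum_apply] using congrFun (hequil i) k
  let s : Fin m ⊕ Fin n → ℝ := Sum.elim 1 (-1)
  have hs : ∀ i j, i ≠ j → Ω i j ≠ 0 → s j = -s i := by
    intro i j hij h
    have hadj := not_not.mp (mt (hsupp i j hij) h)
    rcases i with i | i <;> rcases j with j | j <;> simp_all [s]
  have hrel := sum_smul_veronese_eq_zero
    (transpose_mul_diagonal_mul_eq_zero (isHermitian_iff_isSymm.mp hherm) hs hstress)
  have hindep := linearIndependent_veronese_homogenize
    (by simpa [Sym2.card] using hsum) p hgen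
  have hdiag (i) : Ω i i = 0 := by
    have := Fintype.linearIndependent_iff.mp hindep _ hrel i
    rcases i with i | i <;> simpa [s] using this
  have htrace : Ω.trace = 0 := by simp [trace, hdiag]
  refine ⟨hdiag, fun hne => ⟨fun h => hne (h.trace_eq_zero_iff.mp htrace), fun h => hne ?_⟩⟩
  exact neg_eq_zero.mp (h.trace_eq_zero_iff.mp (by rw [trace_neg, htrace, neg_zero]))

/-- For `m, n ≥ d+2` with `m + n ≤ C(d+2, 2)`, every equilibrium stress
matrix of a generic `d`-dimensional framework on the complete bipartite graph `K_{m,n}`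
has zero diagonal; consequently every nonzero such stress matrix is indefinite. -/
theorem stmt12 (m n d : ℕ) (hm : d + 2 ≤ m) (hn : d + 2 ≤ n)
    (hsum : m + n ≤ Nat.choose (d + 2) 2)
    (p : Fin m ⊕ Fin n → Fin d → ℝ)
    (hgen : AlgebraicIndependent ℚ (fun x : (Fin m ⊕ Fin n) × Fin d => p x.1 x.2))
    (Ω : Matrix (Fin m ⊕ Fin n) (Fin m ⊕ Fin n) ℝ)
    (hherm : Ω.IsHermitian)
    (hsupp : ∀ i j, i ≠ j → ¬ (completeBipartiteGraph (Fin m) (Fin n)).Adj i j → Ω i j = 0)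
    (hrow : ∀ i, ∑ j, Ω i j = 0)
    (hequil : ∀ i, ∑ j, Ω i j • p j = 0) :
    (∀ i, Ω i i = 0) ∧ (Ω ≠ 0 → ¬ Ω.PosSemidef ∧ ¬ (-Ω).PosSemidef) :=
  stmt12_general m n d hsum p hgen Ω hherm hsupp hrow hequil
end

section
/- Let G be a graph that is a d-circuit, i.e., G is not d-independent but every proper subgraph of G is d-independent. Then G is (d+1)-independent. (Proof via coning: G is d-independent iff the cone v_0 * G is (d+1)-independent; since G − v is d-independent for every vertex v, v_0 * (G − v) is (d+1)-independent, and G embeds as a subgraph of v_0 * (G − v).) -/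
/-- A configuration is generic if its coordinates are algebraically independent over `ℚ`. -/
def GenericConfig {n d : ℕ} (p : Fin n → Fin d → ℝ) : Prop :=
  AlgebraicIndependent ℚ (fun x : Fin n × Fin d => p x.1 x.2)

/-- `G` is `d`-independent: no generic `d`-dimensional framework on `G` supports a nonzero
equilibrium stress. -/
def Indep (n d : ℕ) (G : SimpleGraph (Fin n)) : Prop :=
  ∀ p : Fin n → Fin d → ℝ, GenericConfig p →
    ∀ ω : Fin n → Fin n → ℝ, IsStressOf d G p ω → ω = 0

/-! A nonzero stress `ω` of a generic `(d+1)`-dimensional framework `(G, p)` is also a stress of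
the generic `d`-dimensional framework `(G, q)` obtained by dropping the last coordinate. Pick
`ω a b ≠ 0`. As `G` minus the edge `ab` is `d`-independent, the stresses of `(G, q)` form a line,
and since the stress equations are linear with coefficients in any field containing the
coordinates of `q`, this line contains a stress `ω₀` with entries in the field `F` generated over
`ℚ` by all coordinates of `p` except `p b (last d)`. Being a nonzero multiple of `ω`, `ω₀` is in
equilibrium at `a` in the last coordinate, which expresses `p b (last d)` as an element of `F`:
this contradicts the algebraic independence of the coordinates of `p`. -/

open Matrix

theorem Matrix.exists_mulVec_eq_zero_of_map {m n K L : Type*} [Fintype m] [Fintype n]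
    [Field K] [Semiring L] (f : K →+* L) (A : Matrix m n K)
    (h : ∃ v ≠ 0, A.map f *ᵥ v = 0) : ∃ v ≠ 0, A *ᵥ v = 0 := by
  classical
  contrapose! h
  obtain ⟨g, hg⟩ := (Matrix.toLin' A).exists_leftInverse_of_injective <|
    LinearMap.ker_eq_bot'.2 fun v hv => by_contra fun hne => h v hne hv
  have hBA : LinearMap.toMatrix' g * A = 1 := by
    rw [← LinearMap.toMatrix'_toLin' A, ← LinearMap.toMatrix'_comp, hg, LinearMap.toMatrix'_id]
  intro v hne hv
  refine hne ?_
  calc v = ((LinearMap.toMatrix' g * A).map f) *ᵥ v := by simp [hBA]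
    _ = 0 := by rw [Matrix.map_mul, ← Matrix.mulVec_mulVec, hv, Matrix.mulVec_zero]

theorem AlgebraicIndependent.notMem_adjoin_image_compl {ι K L : Type*} [Field K] [Field L]
    [Algebra K L] {x : ι → L} (hx : AlgebraicIndependent K x) (i : ι) :
    x i ∉ IntermediateField.adjoin K (x '' {i}ᶜ) := by
  intro hi
  have htr : Transcendental (Algebra.adjoin K (x '' {i}ᶜ)) (x i) :=
    hx.transcendental_adjoin (Set.notMem_compl_iff.2 rfl)
  rw [← IntermediateField.transcendental_adjoin_iff] at htr
  exact htr (isAlgebraic_algebraMap (⟨x i, hi⟩ : IntermediateField.adjoin K (x '' {i}ᶜ)))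

theorem IntermediateField.mem_of_sum_mul_eq_zero {ι K L : Type*} [Fintype ι] [Field K] [Field L] [Algebra K L] (F : IntermediateField K L) {w z : ι → L} {b : ι}
    (hsum : ∑ j, w j * z j = 0) (hw : ∀ j, w j ∈ F) (hz : ∀ j ≠ b, z j ∈ F) (hb : w b ≠ 0) :
    z b ∈ F := by
  classical
  have hsplit := Finset.add_sum_erase Finset.univ (fun j => w j * z j) (Finset.mem_univ b)
  have hzb : z b = -(∑ j ∈ Finset.univ.erase b, w j * z j) / w b := by
    rw [eq_div_iff hb]
    linear_combination hsplit + hsum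
  rw [hzb]
  exact div_mem (neg_mem (sum_mem fun j hj => mul_mem (hw j) (hz j (Finset.ne_of_mem_erase hj))))
    (hw b)

section Stress

variable {n d : ℕ} {G : SimpleGraph (Fin n)} {p : Fin n → Fin d → ℝ} {ω ω' : Fin n → Fin n → ℝ}

theorem isStressOf_iff_s14 : IsStressOf d G p ω ↔ (∀ i j, ω i j = ω j i) ∧
    (∀ i j, ¬ G.Adj i j → ω i j = 0) ∧ ∀ i k, ∑ j, ω i j * (p j k - p i k) = 0 := by
  simp only [IsStressOf, funext_iff, Finset.sum_apply, Pi.smul_apply, Pi.sub_apply, smul_eq_mul,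
    Pi.zero_apply]

theorem IsStressOf.adj (hω : IsStressOf d G p ω) {i j : Fin n} (hij : ω i j ≠ 0) : G.Adj i j :=
  by_contra fun h => hij (hω.2.1 i j h)

theorem IsStressOf.smul (hω : IsStressOf d G p ω) (c : ℝ) : IsStressOf d G p (c • ω) := by
  refine ⟨fun i j => by simp [hω.1 i j], fun i j h => by simp [hω.2.1 i j h], fun i => ?_⟩
  simp only [Pi.smul_apply, smul_eq_mul, mul_smul, ← Finset.smul_sum, hω.2.2 i, smul_zero]

theorem IsStressOf.sub (hω : IsStressOf d G p ω) (hω' : IsStressOf d G p ω') :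
    IsStressOf d G p (ω - ω') := by
  refine ⟨fun i j => by simp [hω.1 i j, hω'.1 i j], fun i j h => by simp [hω.2.1 i j h,
    hω'.2.1 i j h], fun i => ?_⟩
  simp only [Pi.sub_apply, sub_smul, Finset.sum_sub_distrib, hω.2.2 i, hω'.2.2 i, sub_zero]

theorem IsStressOf.deleteEdges (hω : IsStressOf d G p ω) {a b : Fin n} (hab : ω a b = 0) :
    IsStressOf d (G.deleteEdges {s(a, b)}) p ω := by
  refine ⟨hω.1, fun i j h => ?_, hω.2.2⟩
  rw [SimpleGraph.deleteEdges_adj, not_and_or, not_not, Set.mem_singleton_iff, Sym2.eq_iff] at h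
  rcases h with h | ⟨rfl, rfl⟩ | ⟨rfl, rfl⟩
  · exact hω.2.1 i j h
  · exact hab
  · rw [hω.1, hab]

theorem IsStressOf.castSucc {p : Fin n → Fin (d + 1) → ℝ} (hω : IsStressOf (d + 1) G p ω) :
    IsStressOf d G (fun i k => p i k.castSucc) ω := by
  rw [isStressOf_iff_s14] at hω ⊢
  exact ⟨hω.1, hω.2.1, fun i k => hω.2.2 i k.castSucc⟩

theorem GenericConfig.castSucc {p : Fin n → Fin (d + 1) → ℝ} (hp : GenericConfig p) :
    GenericConfig (fun i (k : Fin d) => p i k.castSucc) :=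
  hp.comp (Prod.map id Fin.castSucc) (Function.injective_id.prodMap (Fin.castSucc_injective d))

end Stress

section StressMatrix

variable {n d : ℕ} (G : SimpleGraph (Fin n)) [DecidableRel G.Adj]

/-- Rows: symmetry of `x`, vanishing of `x` off the edges of `G`, and the equilibrium
conditions at each vertex and coordinate; `x (i, j)` plays the role of `ω i j`. -/
def stressMatrix {R : Type*} [CommRing R] (q : Fin n → Fin d → R) :
    Matrix (((Fin n × Fin n) ⊕ (Fin n × Fin n)) ⊕ (Fin n × Fin d)) (Fin n × Fin n) R
  | .inl (.inl (i, j)), c => (if c = (i, j) then 1 else 0) - (if c = (j, i) then 1 else 0)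
  | .inl (.inr (i, j)), c => if G.Adj i j then 0 else if c = (i, j) then 1 else 0
  | .inr (i, k), c => if c.1 = i then q c.2 k - q i k else 0

theorem stressMatrix_map {R S : Type*} [CommRing R] [CommRing S] (f : R →+* S)
    (q : Fin n → Fin d → R) :
    (stressMatrix G q).map f = stressMatrix G (fun i k => f (q i k)) := by
  ext ((⟨i, j⟩ | ⟨i, j⟩) | ⟨i, k⟩) c <;> simp [stressMatrix, apply_ite f]

variable {R : Type*} [CommRing R] (q : Fin n → Fin d → R) (x : Fin n × Fin n → R)

theorem stressMatrix_mulVec_symm (i j : Fin n) :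
    (stressMatrix G q *ᵥ x) (.inl (.inl (i, j))) = x (i, j) - x (j, i) := by
  simp [mulVec, dotProduct, stressMatrix, sub_mul, Finset.sum_sub_distrib]

theorem stressMatrix_mulVec_nonedge (i j : Fin n) :
    (stressMatrix G q *ᵥ x) (.inl (.inr (i, j))) = if G.Adj i j then 0 else x (i, j) := by
  by_cases h : G.Adj i j <;> simp [mulVec, dotProduct, stressMatrix, h]

theorem stressMatrix_mulVec_equilibrium (i : Fin n) (k : Fin d) :
    (stressMatrix G q *ᵥ x) (.inr (i, k)) = ∑ j, x (i, j) * (q j k - q i k) := by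
  simp [mulVec, dotProduct, stressMatrix, Fintype.sum_prod_type, mul_comm]

theorem stressMatrix_mulVec_eq_zero_iff (q : Fin n → Fin d → ℝ) (x : Fin n × Fin n → ℝ) :
    stressMatrix G q *ᵥ x = 0 ↔ IsStressOf d G q (fun i j => x (i, j)) := by
  simp only [isStressOf_iff_s14, funext_iff, Sum.forall, Prod.forall, Pi.zero_apply,
    stressMatrix_mulVec_symm, stressMatrix_mulVec_nonedge, stressMatrix_mulVec_equilibrium,
    sub_eq_zero, ite_eq_left_iff, and_assoc]

end StressMatrix

section Circuit

variable {n d : ℕ} {G : SimpleGraph (Fin n)} {q : Fin n → Fin d → ℝ} {ω ω' : Fin n → Fin n → ℝ}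

/-- The stress equations have coefficients in any field `K` containing the coordinates, so a
nonzero stress can be found with entries in `K`. -/
theorem IsStressOf.exists_mem_subfield (K : Subfield ℝ) (hqK : ∀ i k, q i k ∈ K)
    (hω : IsStressOf d G q ω) (hne : ω ≠ 0) :
    ∃ ω₀, IsStressOf d G q ω₀ ∧ ω₀ ≠ 0 ∧ ∀ i j, ω₀ i j ∈ K := by
  classical
  let Q : Fin n → Fin d → K := fun i k => ⟨q i k, hqK i k⟩
  have hmap : (stressMatrix G Q).map K.subtype = stressMatrix G q := stressMatrix_map G _ Q
  obtain ⟨y, hy0, hy⟩ := (stressMatrix G Q).exists_mulVec_eq_zero_of_map K.subtype <| by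
    refine ⟨fun c => ω c.1 c.2, fun h => hne (funext₂ fun i j => congr_fun h (i, j)), ?_⟩
    rw [hmap, stressMatrix_mulVec_eq_zero_iff]
    exact hω
  refine ⟨fun i j => y (i, j), ?_, fun h => hy0 (funext fun c => ?_), fun i j => (y (i, j)).2⟩
  · refine (stressMatrix_mulVec_eq_zero_iff G q (fun c => y c)).1 ?_
    rw [← hmap]
    funext r
    change (_ *ᵥ (K.subtype ∘ y)) r = 0
    rw [← RingHom.map_mulVec, hy, Pi.zero_apply, map_zero]
  · exact Subtype.ext (congr_fun₂ h c.1 c.2)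

theorem IsStressOf.eq_smul_of_forall_lt_indep (hq : GenericConfig q)
    (hproper : ∀ H : SimpleGraph (Fin n), H < G → Indep n d H)
    (hω : IsStressOf d G q ω) (hω' : IsStressOf d G q ω') {a b : Fin n} (hab : ω a b ≠ 0) :
    ω' = (ω' a b / ω a b) • ω := by
  have hlt : G.deleteEdges {s(a, b)} < G :=
    lt_of_le_of_ne (G.deleteEdges_le _) fun h => by
      simpa using (h.symm ▸ hω.adj hab : (G.deleteEdges {s(a, b)}).Adj a b)
  have hδ := (hω'.sub (hω.smul (ω' a b / ω a b))).deleteEdges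
    (a := a) (b := b) (by simp [div_mul_cancel₀ _ hab])
  exact sub_eq_zero.1 (hproper _ hlt q hq _ hδ)

end Circuit

theorem stmt14_general (n d : ℕ) (G : SimpleGraph (Fin n))
    (hproper : ∀ H : SimpleGraph (Fin n), H < G → Indep n d H) :
    Indep n (d + 1) G := by
  intro p hp ω hω
  by_contra hne
  obtain ⟨a, b, hab⟩ : ∃ a b, ω a b ≠ 0 := by
    by_contra! h
    exact hne (funext₂ h)
  let F := IntermediateField.adjoin ℚ
    ((fun x : Fin n × Fin (d + 1) => p x.1 x.2) '' {(b, Fin.last d)}ᶜ)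
  have hpF : ∀ i k, (i, k) ≠ (b, Fin.last d) → p i k ∈ F := fun i k h =>
    IntermediateField.subset_adjoin _ _ ⟨(i, k), h, rfl⟩
  obtain ⟨ω₀, hω₀, hω₀ne, hω₀F⟩ := hω.castSucc.exists_mem_subfield F.toSubfield
    (fun i k => hpF i _ fun h => (Fin.castSucc_lt_last k).ne (congr_arg Prod.snd h)) hne
  have hscale := hω.castSucc.eq_smul_of_forall_lt_indep hp.castSucc hproper hω₀ hab
  have hc : ω₀ a b / ω a b ≠ 0 := fun h => hω₀ne (by rw [hscale, h, zero_smul])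
  have hab₀ : ω₀ a b ≠ 0 := by
    rw [hscale]
    exact mul_ne_zero hc hab
  have haF : p a (Fin.last d) ∈ F := hpF a _ (by simp [(hω.adj hab).ne])
  have hequil := (isStressOf_iff_s14.1 (hscale ▸ hω.smul _ : IsStressOf (d + 1) G p ω₀)).2.2 a
    (Fin.last d)
  have hbF : p b (Fin.last d) - p a (Fin.last d) ∈ F :=
    F.mem_of_sum_mul_eq_zero (z := fun j => p j (Fin.last d) - p a (Fin.last d)) hequil
      (hω₀F a) (fun j hj => sub_mem (hpF j _ (by simp [hj])) haF) hab₀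
  exact hp.notMem_adjoin_image_compl (b, Fin.last d) <| by
    simpa using add_mem hbF haF

/-- If `G` is a `d`-circuit (`G` is not `d`-independent but every proper
subgraph of `G` is `d`-independent), then `G` is `(d+1)`-independent. -/
theorem stmt14 (n d : ℕ) (G : SimpleGraph (Fin n))
    (hdep : ¬ Indep n d G)
    (hproper : ∀ H : SimpleGraph (Fin n), H < G → Indep n d H) :
    Indep n (d + 1) G :=
  stmt14_general n d G hproper
end
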